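/- arXiv:2312.02623 — 4 statements merged into one kernel-verified Lean document; each statement's English description precedes it below -/
import Mathlib

section
/- Let R be a ring and D a class of right R-modules closed under arbitrary direct sums which is λ-categorical for some infinite cardinal λ. Let M and N be non-zero modules in D, put μ = |M| + ℵ₀ and ν = |N| + ℵ₀, and assume μ ≤ ν ≤ λ. Then M^(ν) ≅ N^(ν), where X^(ν) denotes the direct sum of ν copies of X. -/
universe u

open Cardinal DirectSum

namespace DeconAEC

variable (R : Type u) [Ring R]

/-- `M` is `< κ`-presented: it has a presentation with `< κ` generators and `< κ` relations. -/
def PresentedLT (κ : Cardinal.{u}) (M : ModuleCat.{u} R) : Prop :=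
  ∃ (ι : Type u) (f : (ι →₀ R) →ₗ[R] ↥M) (s : Set (ι →₀ R)),
    #ι < κ ∧ Function.Surjective f ∧ #s < κ ∧ Submodule.span R s = LinearMap.ker f

/-- `M` is `≤ κ`-presented: it has a presentation with `≤ κ` generators and `≤ κ` relations. -/
def PresentedLE (κ : Cardinal.{u}) (M : ModuleCat.{u} R) : Prop :=
  ∃ (ι : Type u) (f : (ι →₀ R) →ₗ[R] ↥M) (s : Set (ι →₀ R)),
    #ι ≤ κ ∧ Function.Surjective f ∧ #s ≤ κ ∧ Submodule.span R s = LinearMap.ker f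

/-- `M` is `κ`-generated: it has a generating set of cardinality `≤ κ`. -/
def GeneratedLE (κ : Cardinal.{u}) (M : ModuleCat.{u} R) : Prop :=
  ∃ s : Set ↥M, #s ≤ κ ∧ Submodule.span R s = ⊤

/-- `F` is a `𝒞`-filtration of `M` of length `σ`: an increasing continuous chain of
submodules starting at `0`, ending at `M`, with consecutive factors isomorphic to
modules from `𝒞`. -/
def IsFiltration (𝒞 : ModuleCat.{u} R → Prop) {M : Type u} [AddCommGroup M] [Module R M]
    (σ : Ordinal.{u}) (F : Ordinal.{u} → Submodule R M) : Prop :=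
  F 0 = ⊥ ∧ F σ = ⊤ ∧
  (∀ α β : Ordinal.{u}, α ≤ β → β ≤ σ → F α ≤ F β) ∧
  (∀ α : Ordinal.{u}, α ≤ σ → Order.IsSuccLimit α → F α = ⨆ β : {β : Ordinal.{u} // β < α}, F β.1) ∧
  (∀ α : Ordinal.{u}, α < σ →
    ∃ C : ModuleCat.{u} R, 𝒞 C ∧
      Nonempty ((↥(F (α + 1)) ⧸ (F α).comap (F (α + 1)).subtype) ≃ₗ[R] ↥C))

/-- `M ∈ Filt 𝒞` : `M` admits a `𝒞`-filtration. -/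
def MemFilt (𝒞 : ModuleCat.{u} R → Prop) (M : ModuleCat.{u} R) : Prop :=
  ∃ (σ : Ordinal.{u}) (F : Ordinal.{u} → Submodule R ↥M), IsFiltration R 𝒞 σ F

/-- `𝒜` is `κ`-deconstructible: `𝒜 = Filt (𝒜^{< κ})`. -/
def Deconstructible (κ : Cardinal.{u}) (𝒜 : ModuleCat.{u} R → Prop) : Prop :=
  ∀ M : ModuleCat.{u} R, 𝒜 M ↔ MemFilt R (fun N => 𝒜 N ∧ PresentedLT R κ N) M

/-- `𝒜` is closed under isomorphisms. -/
def IsoClosed (𝒜 : ModuleCat.{u} R → Prop) : Prop :=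
  ∀ M N : ModuleCat.{u} R, Nonempty (↥M ≃ₗ[R] ↥N) → 𝒜 M → 𝒜 N

/-- `𝒜` is closed under direct summands: every module isomorphic to a direct summand of
a module from `𝒜` belongs to `𝒜`. -/
def SummandClosed (𝒜 : ModuleCat.{u} R → Prop) : Prop :=
  ∀ M : ModuleCat.{u} R, 𝒜 M → ∀ N N' : Submodule R ↥M, IsCompl N N' →
    ∀ X : ModuleCat.{u} R, Nonempty (↥X ≃ₗ[R] ↥N) → 𝒜 X

/-- `𝒜` is closed under direct limits of directed systems. -/
def DirLimClosed (𝒜 : ModuleCat.{u} R → Prop) : Prop :=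
  ∀ (ι : Type u) [Preorder ι] [IsDirected ι (· ≤ ·)] [Nonempty ι] [DecidableEq ι]
    (G : ι → Type u) [∀ i, AddCommGroup (G i)] [∀ i, Module R (G i)]
    (f : ∀ i j, i ≤ j → G i →ₗ[R] G j),
    DirectedSystem G (fun i j h => f i j h) →
    (∀ i, 𝒜 (ModuleCat.of R (G i))) →
    𝒜 (ModuleCat.of R (Module.DirectLimit G f))

/-- `𝒜` is closed under arbitrary direct sums. -/
def DirSumClosed (𝒜 : ModuleCat.{u} R → Prop) : Prop :=
  ∀ (ι : Type u) (G : ι → ModuleCat.{u} R), (∀ i, 𝒜 (G i)) →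
    𝒜 (ModuleCat.of R (⨁ i, ↥(G i)))

/-- `𝒜` is `λ`-categorical: it contains a module of cardinality `λ`, and all its modules
of cardinality `λ` are isomorphic. -/
def Categorical (𝒜 : ModuleCat.{u} R → Prop) (lam : Cardinal.{u}) : Prop :=
  (∃ M : ModuleCat.{u} R, 𝒜 M ∧ #↥M = lam) ∧
  ∀ M N : ModuleCat.{u} R, 𝒜 M → 𝒜 N → #↥M = lam → #↥N = lam →
    Nonempty (↥M ≃ₗ[R] ↥N)

/-- `Ext^i_R(M, N) = 0`. -/
def ExtVanish (i : ℕ) (M N : ModuleCat.{u} R) : Prop :=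
  Subsingleton (((_root_.Ext ℤ (ModuleCat.{u} R) i).obj (Opposite.op M)).obj N)

/-- `M` is a strong splitter: `Ext¹_R(M, M^(I)) = 0` for every index set `I`. -/
def StrongSplitter (M : ModuleCat.{u} R) : Prop :=
  ∀ I : Type u, ExtVanish R 1 M (ModuleCat.of R (I →₀ ↥M))

/-! ### Abstract elementary classes of modules

The strong submodule relation `⪯` is encoded by a predicate
`SLE : ∀ M, Submodule R ↥M → Prop`, where `SLE M N` means `N ⪯ M`. -/

/-- A chain `(F i | i < δ)` of submodules of an ambient module which is increasing and
continuous at limit ordinals. -/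
def IsContChain {X : Type u} [AddCommGroup X] [Module R X] (δ : Ordinal.{u})
    (F : Ordinal.{u} → Submodule R X) : Prop :=
  (∀ i j : Ordinal.{u}, i ≤ j → j < δ → F i ≤ F j) ∧
  (∀ i : Ordinal.{u}, i < δ → Order.IsSuccLimit i → F i = ⨆ j : {j : Ordinal.{u} // j < i}, F j.1)

/-- The union of the chain `(F i | i < δ)`. -/
def chainUnion {X : Type u} [AddCommGroup X] [Module R X] (δ : Ordinal.{u})
    (F : Ordinal.{u} → Submodule R X) : Submodule R X :=
  ⨆ j : {j : Ordinal.{u} // j < δ}, F j.1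

section
variable (𝒜 : ModuleCat.{u} R → Prop) (SLE : ∀ M : ModuleCat.{u} R, Submodule R ↥M → Prop)

/-- Both members of a `⪯`-pair belong to the class `𝒜`. -/
def RelOnClass : Prop :=
  ∀ (M : ModuleCat.{u} R) (N : Submodule R ↥M), SLE M N →
    𝒜 M ∧ 𝒜 (ModuleCat.of R ↥N)

/-- The strong submodule relation is closed under isomorphisms. -/
def RelIsoClosed : Prop :=
  ∀ (M M' : ModuleCat.{u} R) (e : ↥M ≃ₗ[R] ↥M') (N : Submodule R ↥M),
    SLE M N → SLE M' (N.map (e : ↥M →ₗ[R] ↥M'))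

/-- Reflexivity of `⪯` on `𝒜`. -/
def RelRefl : Prop := ∀ M : ModuleCat.{u} R, 𝒜 M → SLE M ⊤

/-- Transitivity of `⪯`: if `N ⊆ P ⊆ M`, `N ⪯ P` and `P ⪯ M`, then `N ⪯ M`. -/
def RelTrans : Prop :=
  ∀ (M : ModuleCat.{u} R) (N P : Submodule R ↥M), N ≤ P → SLE M P →
    SLE (ModuleCat.of R ↥P) (N.comap P.subtype) → SLE M N

/-- `⪯` refines direct summands: `N ⪯ M` whenever `N, M ∈ 𝒜` and `N` is a direct summand
of `M`. -/
def RefinesSummands : Prop :=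
  ∀ M : ModuleCat.{u} R, 𝒜 M → ∀ N N' : Submodule R ↥M, IsCompl N N' →
    𝒜 (ModuleCat.of R ↥N) → SLE M N

/-- Axiom (A1)(i): the union of a continuous `⪯`-increasing chain in `𝒜` belongs to `𝒜`. -/
def AxA1i : Prop :=
  ∀ (X : ModuleCat.{u} R) (δ : Ordinal.{u}) (F : Ordinal.{u} → Submodule R ↥X), 0 < δ →
    IsContChain R δ F →
    (∀ i : Ordinal.{u}, i < δ → 𝒜 (ModuleCat.of R ↥(F i))) →
    (∀ i : Ordinal.{u}, i + 1 < δ →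
      SLE (ModuleCat.of R ↥(F (i + 1))) ((F i).comap (F (i + 1)).subtype)) →
    𝒜 (ModuleCat.of R ↥(chainUnion R δ F))

/-- Axiom (A1)(ii): each member of a continuous `⪯`-increasing chain in `𝒜` is strong
in the union of the chain. -/
def AxA1ii : Prop :=
  ∀ (X : ModuleCat.{u} R) (δ : Ordinal.{u}) (F : Ordinal.{u} → Submodule R ↥X), 0 < δ →
    IsContChain R δ F →
    (∀ i : Ordinal.{u}, i < δ → 𝒜 (ModuleCat.of R ↥(F i))) →
    (∀ i : Ordinal.{u}, i + 1 < δ →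
      SLE (ModuleCat.of R ↥(F (i + 1))) ((F i).comap (F (i + 1)).subtype)) →
    ∀ j : Ordinal.{u}, j < δ →
      SLE (ModuleCat.of R ↥(chainUnion R δ F))
        ((F j).comap (chainUnion R δ F).subtype)

/-- Axiom (A1)(iii): if every member of a continuous `⪯`-increasing chain in `𝒜` is
strong in `M ∈ 𝒜`, then so is the union of the chain. -/
def AxA1iii : Prop :=
  ∀ (X : ModuleCat.{u} R) (δ : Ordinal.{u}) (F : Ordinal.{u} → Submodule R ↥X), 0 < δ →
    IsContChain R δ F →
    (∀ i : Ordinal.{u}, i < δ → 𝒜 (ModuleCat.of R ↥(F i))) →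
    (∀ i : Ordinal.{u}, i + 1 < δ →
      SLE (ModuleCat.of R ↥(F (i + 1))) ((F i).comap (F (i + 1)).subtype)) →
    𝒜 X → (∀ i : Ordinal.{u}, i < δ → SLE X (F i)) →
    SLE X (chainUnion R δ F)

/-- Axiom (A2): if `A ⪯ C`, `B ⪯ C` and `A ⊆ B`, then `A ⪯ B`. -/
def AxA2 : Prop :=
  ∀ (M : ModuleCat.{u} R) (N P : Submodule R ↥M), N ≤ P → SLE M N → SLE M P →
    SLE (ModuleCat.of R ↥P) (N.comap P.subtype)

/-- Axiom (A3) with the bound `lam`: every submodule `N` of a module `B ∈ 𝒜` is contained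
in a strong submodule `P ⪯ B`, `P ∈ 𝒜`, with `|P| ≤ |N| + lam`. -/
def AxA3With (lam : Cardinal.{u}) : Prop :=
  ∀ B : ModuleCat.{u} R, 𝒜 B → ∀ N : Submodule R ↥B,
    ∃ P : Submodule R ↥B, N ≤ P ∧ 𝒜 (ModuleCat.of R ↥P) ∧ SLE B P ∧ #↥P ≤ #↥N + lam

/-- `(𝒜, ⪯)` is an abstract elementary class of modules. -/
structure IsAEC : Prop where
  iso_closed : IsoClosed R 𝒜
  rel_on_class : RelOnClass R 𝒜 SLE
  rel_iso_closed : RelIsoClosed R SLE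
  rel_refl : RelRefl R 𝒜 SLE
  rel_trans : RelTrans R SLE
  a1i : AxA1i R 𝒜 SLE
  a1ii : AxA1ii R 𝒜 SLE
  a1iii : AxA1iii R 𝒜 SLE
  a2 : AxA2 R SLE
  a3 : ∃ lam : Cardinal.{u}, ℵ₀ ≤ lam ∧ #R ≤ lam ∧ AxA3With R 𝒜 SLE lam

end
end DeconAEC

namespace EilenbergAux
variable {R : Type u} [Ring R]

/-- `(ι →₀ X × Y) ≃ₗ (ι →₀ X) × (ι →₀ Y)`. -/
noncomputable def finsuppProdLEquivProd (ι : Type u) (X Y : Type u) [AddCommGroup X] [Module R X]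
    [AddCommGroup Y] [Module R Y] :
    (ι →₀ X × Y) ≃ₗ[R] (ι →₀ X) × (ι →₀ Y) :=
  LinearEquiv.ofLinear
    ((Finsupp.mapRange.linearMap (LinearMap.fst R X Y)).prod
      (Finsupp.mapRange.linearMap (LinearMap.snd R X Y)))
    ((Finsupp.mapRange.linearMap (LinearMap.inl R X Y)).comp (LinearMap.fst R _ _) +
      (Finsupp.mapRange.linearMap (LinearMap.inr R X Y)).comp (LinearMap.snd R _ _))
    (by ext g i <;> simp [Finsupp.mapRange_apply])
    (by ext g i <;> simp [Finsupp.mapRange_apply])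

/-- `(I →₀ X) × (I →₀ X) ≃ₗ (I →₀ X)` from `I ⊕ I ≃ I`. -/
noncomputable def finsuppDbl {I : Type u} (eoo : (I ⊕ I) ≃ I) (X : Type u) [AddCommGroup X]
    [Module R X] : ((I →₀ X) × (I →₀ X)) ≃ₗ[R] (I →₀ X) :=
  (Finsupp.sumFinsuppLEquivProdFinsupp R).symm ≪≫ₗ Finsupp.domLCongr eoo

/-- `(I →₀ (I →₀ X)) ≃ₗ (I →₀ X)` from `I × I ≃ I`. -/
noncomputable def finsuppSq {I : Type u} (eII : (I × I) ≃ I) (X : Type u) [AddCommGroup X]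
    [Module R X] : (I →₀ (I →₀ X)) ≃ₗ[R] (I →₀ X) :=
  (Finsupp.finsuppProdLEquiv R).symm ≪≫ₗ Finsupp.domLCongr eII

/-- Eilenberg swindle. -/
theorem swindle {A B : Type u} [AddCommGroup A] [Module R A] [AddCommGroup B] [Module R B]
    (I : Type u) (eoo : (I ⊕ I) ≃ I) (eII : (I × I) ≃ I)
    (eA : (I →₀ A) ≃ₗ[R] A) (eB : (I →₀ B) ≃ₗ[R] B)
    (jA : A →ₗ[R] B) (rA : B →ₗ[R] A) (hA : rA.comp jA = LinearMap.id)
    (jB : B →ₗ[R] A) (rB : A →ₗ[R] B) (hB : rB.comp jB = LinearMap.id) :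
    Nonempty (A ≃ₗ[R] B) := by
  classical
  set K := LinearMap.ker rA with hK
  set K' := LinearMap.ker rB with hK'
  have dB : (↥K × A) ≃ₗ[R] B :=
    lequivProdOfRightSplitExact K.injective_subtype (Submodule.range_subtype K) hA
  have dA : (↥K' × B) ≃ₗ[R] A :=
    lequivProdOfRightSplitExact K'.injective_subtype (Submodule.range_subtype K') hB
  -- abbreviations
  set FK : Type u := I →₀ ↥K
  set FK' : Type u := I →₀ ↥K'
  have cA : A ≃ₗ[R] FK' × B :=
    eA.symm ≪≫ₗ Finsupp.lcongr (Equiv.refl I) dA.symm ≪≫ₗ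
      finsuppProdLEquivProd I ↥K' B ≪≫ₗ LinearEquiv.prodCongr (LinearEquiv.refl R FK') eB
  have cB : B ≃ₗ[R] FK × A :=
    eB.symm ≪≫ₗ Finsupp.lcongr (Equiv.refl I) dB.symm ≪≫ₗ
      finsuppProdLEquivProd I ↥K A ≪≫ₗ LinearEquiv.prodCongr (LinearEquiv.refl R FK) eA
  set Z : Type u := FK' × FK with hZ
  have cA3 : A ≃ₗ[R] Z × A :=
    cA ≪≫ₗ LinearEquiv.prodCongr (LinearEquiv.refl R FK') cB ≪≫ₗ
      (LinearEquiv.prodAssoc R FK' FK A).symm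
  have cA4 : A ≃ₗ[R] (I →₀ Z) × A :=
    eA.symm ≪≫ₗ Finsupp.lcongr (Equiv.refl I) cA3 ≪≫ₗ finsuppProdLEquivProd I Z A ≪≫ₗ
      LinearEquiv.prodCongr (LinearEquiv.refl R (I →₀ Z)) eA
  have zZ : (I →₀ Z) ≃ₗ[R] Z :=
    finsuppProdLEquivProd I FK' FK ≪≫ₗ
      LinearEquiv.prodCongr (finsuppSq eII ↥K') (finsuppSq eII ↥K)
  have w : (FK × (I →₀ Z)) ≃ₗ[R] (I →₀ Z) :=
    LinearEquiv.prodCongr (LinearEquiv.refl R FK) zZ ≪≫ₗ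
      (LinearEquiv.prodAssoc R FK FK' FK).symm ≪≫ₗ
      LinearEquiv.prodCongr (LinearEquiv.prodComm R FK FK') (LinearEquiv.refl R FK) ≪≫ₗ
      LinearEquiv.prodAssoc R FK' FK FK ≪≫ₗ
      LinearEquiv.prodCongr (LinearEquiv.refl R FK') (finsuppDbl eoo ↥K) ≪≫ₗ zZ.symm
  exact ⟨(cB ≪≫ₗ LinearEquiv.prodCongr (LinearEquiv.refl R FK) cA4 ≪≫ₗ
      (LinearEquiv.prodAssoc R FK (I →₀ Z) A).symm ≪≫ₗ
      LinearEquiv.prodCongr w (LinearEquiv.refl R A) ≪≫ₗ cA4.symm).symm⟩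

/-- Compress a split embedding into a large free-ish power down to a power of size `ν`. -/
theorem compress {M A : Type u} [AddCommGroup M] [Module R M] [AddCommGroup A] [Module R A]
    {Λ : Type u} (j0 : A →ₗ[R] (Λ →₀ M)) (r0 : (Λ →₀ M) →ₗ[R] A)
    (h0 : r0.comp j0 = LinearMap.id) (ν : Cardinal.{u}) (hν : ℵ₀ ≤ ν) (hA : #A ≤ ν)
    (hΛ : ν ≤ #Λ) :
    ∃ (T : Type u), #T = ν ∧ ∃ (j : A →ₗ[R] (T →₀ M)) (r : (T →₀ M) →ₗ[R] A),
      r.comp j = LinearMap.id := by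
  classical
  set S : Set Λ := ⋃ a : A, ((j0 a).support : Set Λ) with hS
  have hScard : #S ≤ ν := by
    refine (Cardinal.mk_iUnion_le _).trans ?_
    have h1 : ⨆ a : A, #((j0 a).support : Set Λ) ≤ ℵ₀ :=
      ciSup_le' fun a => (Cardinal.lt_aleph0_of_finite _).le
    calc #A * ⨆ a : A, #((j0 a).support : Set Λ) ≤ ν * ℵ₀ := mul_le_mul' hA h1
      _ ≤ ν * ν := mul_le_mul' le_rfl hν
      _ = ν := Cardinal.mul_eq_self hν
  obtain ⟨U, hU⟩ := Cardinal.le_mk_iff_exists_set.mp hΛ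
  refine ⟨↥(S ∪ U), ?_, ?_⟩
  · refine le_antisymm ((Cardinal.mk_union_le S U).trans ?_)
      (hU ▸ Cardinal.mk_le_mk_of_subset Set.subset_union_right)
    calc #S + #U ≤ ν + ν := add_le_add hScard hU.le
      _ = ν := Cardinal.add_eq_self hν
  · have hmem : ∀ a : A, j0 a ∈ Finsupp.supported M R (S ∪ U) := by
      intro a
      rw [Finsupp.mem_supported]
      exact (Set.subset_iUnion (fun a : A => ((j0 a).support : Set Λ)) a).trans
        Set.subset_union_left
    refine ⟨(Finsupp.supportedEquivFinsupp (S ∪ U)).toLinearMap.comp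
        (j0.codRestrict (Finsupp.supported M R (S ∪ U)) hmem),
      r0.comp ((Finsupp.supported M R (S ∪ U)).subtype.comp
        (Finsupp.supportedEquivFinsupp (S ∪ U)).symm.toLinearMap), ?_⟩
    ext a
    simp only [LinearMap.comp_apply, LinearEquiv.coe_coe, LinearEquiv.symm_apply_apply,
      Submodule.coe_subtype, LinearMap.codRestrict_apply, LinearMap.id_coe, id_eq]
    exact LinearMap.congr_fun h0 a

theorem split_through {X Y : Type u} [AddCommGroup X] [Module R X] [AddCommGroup Y] [Module R Y]
    {Λ I : Type u} (f : I ↪ Λ) (e : (Λ →₀ X) ≃ₗ[R] (Λ →₀ Y)) (ν : Cardinal.{u})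
    (hν : ℵ₀ ≤ ν) (hX : #(I →₀ X) ≤ ν) (hI : #I = ν) (hΛc : ν ≤ #Λ) :
    ∃ (j : (I →₀ X) →ₗ[R] (I →₀ Y)) (r : (I →₀ Y) →ₗ[R] (I →₀ X)),
      r.comp j = LinearMap.id := by
  classical
  set j0 : (I →₀ X) →ₗ[R] (Λ →₀ Y) := e.toLinearMap.comp (Finsupp.lmapDomain X R f) with hj0
  set r0 : (Λ →₀ Y) →ₗ[R] (I →₀ X) :=
    (Finsupp.lcomapDomain (M := X) f f.injective).comp e.symm.toLinearMap with hr0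
  have h0 : r0.comp j0 = LinearMap.id := by
    refine LinearMap.ext fun g => Finsupp.ext fun a => ?_
    simp only [hj0, hr0, LinearMap.comp_apply, LinearEquiv.coe_coe, LinearEquiv.symm_apply_apply,
      Finsupp.lcomapDomain, Finsupp.lmapDomain, LinearMap.coe_mk, AddHom.coe_mk,
      Finsupp.comapDomain_apply, LinearMap.id_coe, id_eq]
    exact Finsupp.mapDomain_apply f.injective g a
  obtain ⟨T, hT, j, r, hrj⟩ := compress j0 r0 h0 ν hν hX hΛc
  obtain ⟨eT⟩ := Cardinal.eq.mp (hT.trans hI.symm)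
  refine ⟨(Finsupp.domLCongr (M := Y) eT).toLinearMap.comp j,
    r.comp (Finsupp.domLCongr (M := Y) eT).symm.toLinearMap, ?_⟩
  refine LinearMap.ext fun g => ?_
  simp only [LinearMap.comp_apply, LinearEquiv.coe_coe, LinearEquiv.symm_apply_apply,
    LinearMap.id_coe, id_eq]
  exact LinearMap.congr_fun hrj g

end EilenbergAux

open DeconAEC in
/-- If `𝒟` is closed under direct sums (and isomorphisms) and is
`λ`-categorical, and `0 ≠ M, N ∈ 𝒟` satisfy `μ = |M| + ℵ₀ ≤ ν = |N| + ℵ₀ ≤ λ`, then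
`M^{(ν)} ≅ N^{(ν)}`. -/
theorem eilenberg_power_iso (R : Type u) [Ring R] (𝒟 : ModuleCat.{u} R → Prop)
    (hiso : IsoClosed R 𝒟) (hsum : DirSumClosed R 𝒟)
    (lam : Cardinal.{u}) (hlam : ℵ₀ ≤ lam) (hcat : Categorical R 𝒟 lam)
    (M N : ModuleCat.{u} R) (hM : 𝒟 M) (hN : 𝒟 N)
    (hM0 : Nontrivial ↥M) (hN0 : Nontrivial ↥N)
    (hmn : #↥M + ℵ₀ ≤ #↥N + ℵ₀) (hnl : #↥N + ℵ₀ ≤ lam) :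
    ∀ I : Type u, #I = #↥N + ℵ₀ → Nonempty ((I →₀ ↥M) ≃ₗ[R] (I →₀ ↥N)) := by
  classical
  intro I hI
  have hν : ℵ₀ ≤ #↥N + ℵ₀ := self_le_add_left _ _
  haveI : Infinite I := Cardinal.infinite_iff.mpr (by rw [hI]; exact hν)
  set Λ : Type u := lam.out with hΛdef
  have hΛ : #Λ = lam := Cardinal.mk_out lam
  haveI : Infinite Λ := Cardinal.infinite_iff.mpr (by rw [hΛ]; exact hlam)
  have hMle : #↥M ≤ #↥N + ℵ₀ := le_trans (self_le_add_right _ _) hmn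
  have hNle : #↥N ≤ #↥N + ℵ₀ := self_le_add_right _ _
  have hD : ∀ X : ModuleCat.{u} R, 𝒟 X → 𝒟 (ModuleCat.of R (Λ →₀ ↥X)) := by
    intro X hX
    exact hiso (ModuleCat.of R (⨁ _ : Λ, ↥X)) (ModuleCat.of R (Λ →₀ ↥X))
      ⟨(finsuppLEquivDirectSum R ↥X Λ).symm⟩ (hsum Λ (fun _ => X) fun _ => hX)
  have cM : #(Λ →₀ ↥M) = lam := by
    rw [Cardinal.mk_finsupp_of_infinite, hΛ]
    exact max_eq_left (hMle.trans hnl)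
  have cN : #(Λ →₀ ↥N) = lam := by
    rw [Cardinal.mk_finsupp_of_infinite, hΛ]
    exact max_eq_left (hNle.trans hnl)
  obtain ⟨e₀⟩ := hcat.2 (ModuleCat.of R (Λ →₀ ↥M)) (ModuleCat.of R (Λ →₀ ↥N))
    (hD M hM) (hD N hN) cM cN
  obtain ⟨f⟩ := (Cardinal.le_def I Λ).mp (by rw [hI, hΛ]; exact hnl)
  have hXcard : #(I →₀ ↥M) ≤ #↥N + ℵ₀ := by
    rw [Cardinal.mk_finsupp_of_infinite, hI]; exact max_le le_rfl hMle
  have hYcard : #(I →₀ ↥N) ≤ #↥N + ℵ₀ := by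
    rw [Cardinal.mk_finsupp_of_infinite, hI]; exact max_le le_rfl hNle
  have hΛν : #↥N + ℵ₀ ≤ #Λ := by rw [hΛ]; exact hnl
  obtain ⟨jB, rB, hB⟩ :=
    EilenbergAux.split_through (R := R) f e₀.symm (#↥N + ℵ₀) hν hYcard hI hΛν
  obtain ⟨jA, rA, hA⟩ :=
    EilenbergAux.split_through (R := R) f e₀ (#↥N + ℵ₀) hν hXcard hI hΛν
  obtain ⟨eoo⟩ := Cardinal.eq.mp (show #(I ⊕ I) = #I by
    rw [Cardinal.mk_sum, Cardinal.lift_id]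
    exact Cardinal.add_eq_self (Cardinal.aleph0_le_mk I))
  obtain ⟨eII⟩ := Cardinal.eq.mp (show #(I × I) = #I by
    rw [Cardinal.mk_prod, Cardinal.lift_id]
    exact Cardinal.mul_eq_self (Cardinal.aleph0_le_mk I))
  exact EilenbergAux.swindle I eoo eII (EilenbergAux.finsuppSq eII ↥M)
    (EilenbergAux.finsuppSq eII ↥N) jA rA hA jB rB hB
end

section
/- Let R be a ring, κ an infinite cardinal, and M and N right R-modules such that N is a direct summand of M. If M is a direct sum of κ-generated modules, then N is also a direct sum of κ-generated modules. -/
universe u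

open Cardinal DirectSum

namespace WalkerAux

theorem card_biUnion_le {α β : Type u} {κ : Cardinal.{u}} (hκ : ℵ₀ ≤ κ)
    {s : Set α} {A : α → Set β} (hs : #s ≤ κ) (hA : ∀ a, #(A a) ≤ κ) :
    #(⋃ a ∈ s, A a) ≤ κ := by
  rcases s.eq_empty_or_nonempty with rfl | hne
  · simp
  · have : Nonempty s := hne.to_subtype
    refine (Cardinal.mk_biUnion_le A s).trans ?_
    have h1 : ⨆ a : s, #(A a) ≤ κ := ciSup_le' fun a => hA a
    calc #s * ⨆ a : s, #(A a) ≤ κ * κ := mul_le_mul' hs h1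
    _ = κ := Cardinal.mul_eq_self hκ

theorem disjoint_biSup_of_iSupIndep {R : Type u} [Ring R] {M : Type u} [AddCommGroup M]
    [Module R M] {ι : Type u} {G : ι → Submodule R M}
    (h : iSupIndep G) {S T : Set ι} (hST : Disjoint S T) :
    Disjoint (⨆ i ∈ S, G i) (⨆ i ∈ T, G i) := by
  classical
  rw [Submodule.disjoint_def]
  intro x hxS hxT
  rw [Submodule.mem_biSup_iff_exists_dfinsupp (· ∈ S) G] at hxS
  rw [Submodule.mem_biSup_iff_exists_dfinsupp (· ∈ T) G] at hxT
  obtain ⟨f, hf⟩ := hxS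
  obtain ⟨g, hg⟩ := hxT
  have hinj := h.dfinsupp_lsum_injective
  have hfg : f.filter (· ∈ S) = g.filter (· ∈ T) := hinj (hf.trans hg.symm)
  have hz : f.filter (· ∈ S) = 0 := by
    refine DFunLike.ext _ _ fun i => ?_
    by_cases hi : i ∈ S
    · have hit : i ∉ T := fun hT => Set.disjoint_left.mp hST hi hT
      have h2 := DFunLike.congr_fun hfg i
      rw [DFinsupp.filter_apply, DFinsupp.filter_apply, if_pos hi, if_neg hit] at h2
      rw [DFinsupp.filter_apply, if_pos hi, h2, DFinsupp.zero_apply]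
    · rw [DFinsupp.filter_apply, if_neg hi, DFinsupp.zero_apply]
  rw [hz, map_zero] at hf
  exact hf.symm

theorem isCompl_step {α : Type*} [Lattice α] [BoundedOrder α] [IsModularLattice α]
    {a b c d : α} (hab : IsCompl a b) (hc : c ≤ a) (hd : d ≤ a)
    (hcd : c ⊓ d = ⊥) (hcd' : c ⊔ d = a) : IsCompl c (d ⊔ b) := by
  constructor
  · rw [disjoint_iff]
    have h1 : (d ⊔ b) ⊓ a = d ⊔ b ⊓ a := sup_inf_assoc_of_le b hd
    have h2 : b ⊓ a = ⊥ := by rw [inf_comm]; exact disjoint_iff.mp hab.disjoint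
    rw [h2, sup_bot_eq] at h1
    calc c ⊓ (d ⊔ b) = (c ⊓ a) ⊓ (d ⊔ b) := by rw [inf_eq_left.mpr hc]
      _ = c ⊓ ((d ⊔ b) ⊓ a) := by rw [inf_assoc, inf_comm a]
      _ = c ⊓ d := by rw [h1]
      _ = ⊥ := hcd
  · rw [codisjoint_iff, ← sup_assoc, hcd']
    exact codisjoint_iff.mp hab.codisjoint

theorem generatedLE_comap {R : Type u} [Ring R] {M : Type u} [AddCommGroup M] [Module R M]
    {κ : Cardinal.{u}} (N C : Submodule R M) (hCN : C ≤ N) (T : Set M)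
    (hTC : Submodule.span R T = C) (hT : #T ≤ κ) :
    DeconAEC.GeneratedLE R κ (ModuleCat.of R ↥(C.comap N.subtype)) := by
  have hTN : T ⊆ (N : Set M) := fun t ht => hCN (hTC ▸ Submodule.subset_span ht)
  have hTC' : T ⊆ (C : Set M) := fun t ht => hTC ▸ Submodule.subset_span ht
  set P : Submodule R ↥N := C.comap N.subtype with hP
  let f : T → ↥P := fun t => ⟨⟨t.1, hTN t.2⟩, hTC' t.2⟩
  refine ⟨Set.range f, Cardinal.mk_range_le.trans (by simpa using hT), ?_⟩
  have hinj : Function.Injective (N.subtype.comp P.subtype) :=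
    N.injective_subtype.comp P.injective_subtype
  apply Submodule.map_injective_of_injective hinj
  rw [Submodule.map_span, Submodule.map_top]
  have himg : (N.subtype.comp P.subtype) '' Set.range f = T := by
    ext t
    constructor
    · rintro ⟨p, ⟨t', rfl⟩, rfl⟩; exact t'.2
    · intro ht; exact ⟨f ⟨t, ht⟩, ⟨⟨t, ht⟩, rfl⟩, rfl⟩
  rw [himg, hTC, LinearMap.range_comp, Submodule.range_subtype, Submodule.map_comap_subtype,
    inf_eq_right.mpr hCN]

end WalkerAux

open DeconAEC in
/-- C. Walker. If `M` is an (internal) direct sum of `κ`-generated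
modules and `N` is a direct summand of `M`, then `N` is also a direct sum of
`κ`-generated modules. -/
theorem walker_summand_of_direct_sum (R : Type u) [Ring R] (κ : Cardinal.{u})
    (hκ : ℵ₀ ≤ κ) (M : Type u) [AddCommGroup M] [Module R M]
    (N N' : Submodule R M) (hcompl : IsCompl N N')
    (ι : Type u) [DecidableEq ι] (G : ι → Submodule R M)
    (hint : DirectSum.IsInternal G)
    (hgen : ∀ i, GeneratedLE R κ (ModuleCat.of R ↥(G i))) :
    ∃ (ι' : Type u) (H : ι' → Submodule R ↥N),
      (letI : DecidableEq ι' := Classical.decEq ι'; DirectSum.IsInternal H) ∧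
      ∀ i, GeneratedLE R κ (ModuleCat.of R ↥(H i)) := by
    classical
  rcases isEmpty_or_nonempty ι with hempty | hne
  · -- trivial case: M = 0
    refine ⟨ι, fun _ => ⊤, ?_, fun i => isEmptyElim i⟩
    have hN : ∀ x : ↥N, x = 0 := by
      intro x
      have hx : (x : M) ∈ (⊤ : Submodule R M) := trivial
      rw [← hint.submodule_iSup_eq_top, iSup_of_empty] at hx
      exact Subtype.ext (by simpa using hx)
    constructor
    · intro a b _
      refine DFunLike.ext _ _ fun i => isEmptyElim i
    · intro y
      exact ⟨0, by rw [map_zero]; exact (hN y).symm⟩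
  · obtain ⟨lo, wflt⟩ := exists_wellOrder ι
    -- generating sets
    choose sgen hscard hsspan using hgen
    have hsspan' : ∀ i, Submodule.span R (sgen i) = (⊤ : Submodule R ↥(G i)) := hsspan
    set gens : ι → Set M := fun i => ((G i).subtype : ↥(G i) →ₗ[R] M) '' (sgen i) with hgens
    have hgspan : ∀ i, Submodule.span R (gens i) = G i := by
      intro i
      rw [hgens]
      rw [Submodule.span_image, hsspan' i, Submodule.map_top, Submodule.range_subtype]
    have hgcard : ∀ i, #(gens i) ≤ κ := fun i =>
      Cardinal.mk_image_le.trans (by simpa using hscard i)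
    -- MS
    set MS : Set ι → Submodule R M := fun S => ⨆ i ∈ S, G i with hMS
    have MS_mono : ∀ {S T : Set ι}, S ⊆ T → MS S ≤ MS T := fun h => biSup_mono h
    have MS_span : ∀ S, MS S = Submodule.span R (⋃ i ∈ S, gens i) := by
      intro S
      rw [Submodule.span_iUnion₂]
      exact (iSup_congr fun i => iSup_congr fun _ => hgspan i).symm
    have MS_union : ∀ S T, MS (S ∪ T) = MS S ⊔ MS T := fun S T => iSup_union
    -- supp
    have hsupp0 : ∀ x : M, ∃ s : Finset ι, x ∈ MS ↑s := by
      intro x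
      have hx : x ∈ ⨆ i, G i := by rw [hint.submodule_iSup_eq_top]; trivial
      obtain ⟨s, hs⟩ := Submodule.mem_iSup_iff_exists_finset.mp hx
      exact ⟨s, hs⟩
    choose supp hsupp using hsupp0
    -- projections
    set π : M →ₗ[R] M := N.subtype ∘ₗ N.linearProjOfIsCompl N' hcompl with hπdef
    set π' : M →ₗ[R] M := N'.subtype ∘ₗ N'.linearProjOfIsCompl N hcompl.symm with hπ'def
    have hπmem : ∀ x, π x ∈ N := fun x => (N.linearProjOfIsCompl N' hcompl x).2
    have hπ'mem : ∀ x, π' x ∈ N' := fun x => (N'.linearProjOfIsCompl N hcompl.symm x).2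
    have hππ' : ∀ x, π x + π' x = x := fun x =>
      Submodule.projection_add_projection_eq_self hcompl x
    have hπid : ∀ x ∈ N, π x = x := by
      intro x hx
      show N.subtype (N.linearProjOfIsCompl N' hcompl x) = x
      have h1 : N.linearProjOfIsCompl N' hcompl ((⟨x, hx⟩ : N) : M) = ⟨x, hx⟩ :=
        Submodule.linearProjOfIsCompl_apply_left hcompl ⟨x, hx⟩
      rw [show x = ((⟨x, hx⟩ : N) : M) from rfl, h1]
      rfl
    -- the reach sets
    set D : ι → Set ι := fun j =>
      ⋃ g ∈ gens j, ((↑(supp (π g)) ∪ ↑(supp (π' g)) : Set ι)) with hD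
    have hDcard : ∀ j, #(D j) ≤ κ := by
      intro j
      refine WalkerAux.card_biUnion_le hκ (hgcard j) fun g => ?_
      have hfin : ((↑(supp (π g)) ∪ ↑(supp (π' g)) : Set ι)).Finite :=
        ((supp (π g)).finite_toSet.union (supp (π' g)).finite_toSet)
      exact (hfin.lt_aleph0.le).trans hκ
    -- closures
    set step : Set ι → Set ι := fun S => S ∪ ⋃ j ∈ S, D j with hstep
    set cset : ι → Set ι := fun i => ⋃ n : ULift.{u} ℕ, step^[n.down] {i} with hcset
    have hcsub : ∀ i n, step^[n] {i} ⊆ cset i := by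
      intro i n
      simp only [hcset]
      exact Set.subset_iUnion (fun m : ULift.{u} ℕ => step^[m.down] {i}) ⟨n⟩
    have hccard : ∀ i, #(cset i) ≤ κ := by
      intro i
      have hn : ∀ n, #(step^[n] {i}) ≤ κ := by
        intro n
        induction n with
        | zero => simpa using (one_le_aleph0.trans hκ)
        | succ n ih =>
          rw [Function.iterate_succ_apply']
          refine (Cardinal.mk_union_le _ _).trans ?_
          have h2 : #(⋃ j ∈ step^[n] {i}, D j) ≤ κ := WalkerAux.card_biUnion_le hκ ih hDcard
          calc #(step^[n] {i}) + #(⋃ j ∈ step^[n] {i}, D j) ≤ κ + κ := add_le_add ih h2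
            _ = κ := Cardinal.add_eq_self hκ
      simp only [hcset]
      refine (Cardinal.mk_iUnion_le (fun m : ULift.{u} ℕ => step^[m.down] {i})).trans ?_
      have h3 : ⨆ m : ULift.{u} ℕ, #(step^[m.down] {i}) ≤ κ := ciSup_le' fun m => hn m.down
      have h4 : #(ULift.{u} ℕ) ≤ κ := by
        rw [Cardinal.mk_uLift, Cardinal.mk_nat, Cardinal.lift_aleph0]
        exact hκ
      calc #(ULift.{u} ℕ) * ⨆ m : ULift.{u} ℕ, #(step^[m.down] {i}) ≤ κ * κ :=
            mul_le_mul' h4 h3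
        _ = κ := Cardinal.mul_eq_self hκ
    have hcmem : ∀ i, i ∈ cset i := fun i => hcsub i 0 rfl
    have hcclosed : ∀ i j, j ∈ cset i → D j ⊆ cset i := by
      intro i j hj
      obtain ⟨n, hn⟩ : ∃ n : ULift.{u} ℕ, j ∈ step^[n.down] {i} := Set.mem_iUnion.mp hj
      intro k hk
      have hk2 : k ∈ step^[n.down + 1] {i} := by
        rw [Function.iterate_succ_apply']
        exact Or.inr (Set.mem_biUnion hn hk)
      exact hcsub i (n.down + 1) hk2
    -- invariance of MS over D-closed sets
    have hinvπ : ∀ S : Set ι, (∀ j ∈ S, D j ⊆ S) → Submodule.map π (MS S) ≤ MS S := by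
      intro S hS
      rw [MS_span S, Submodule.map_span]
      refine Submodule.span_le.mpr ?_
      rintro y ⟨x, hx, rfl⟩
      obtain ⟨j, hj, hg⟩ := Set.mem_iUnion₂.mp hx
      have hsub : (↑(supp (π x)) : Set ι) ⊆ D j := by
        intro k hk
        exact Set.mem_biUnion hg (Or.inl hk)
      have hmem : π x ∈ MS ↑(supp (π x)) := hsupp (π x)
      have := MS_mono (hsub.trans (hS j hj)) hmem
      rw [← MS_span S]
      exact this
    have hinvπ' : ∀ S : Set ι, (∀ j ∈ S, D j ⊆ S) → Submodule.map π' (MS S) ≤ MS S := by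
      intro S hS
      rw [MS_span S, Submodule.map_span]
      refine Submodule.span_le.mpr ?_
      rintro y ⟨x, hx, rfl⟩
      obtain ⟨j, hj, hg⟩ := Set.mem_iUnion₂.mp hx
      have hsub : (↑(supp (π' x)) : Set ι) ⊆ D j := by
        intro k hk
        exact Set.mem_biUnion hg (Or.inr hk)
      have hmem : π' x ∈ MS ↑(supp (π' x)) := hsupp (π' x)
      have := MS_mono (hsub.trans (hS j hj)) hmem
      rw [← MS_span S]
      exact this
    -- the filtration index sets
    set U : Set ι → Set ι := fun W => ⋃ j ∈ W, cset j with hU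
    have hUmono : ∀ {W W' : Set ι}, W ⊆ W' → U W ⊆ U W' := by
      intro W W' h
      exact Set.biUnion_subset_biUnion_left h
    have hUclosed : ∀ W, ∀ j ∈ U W, D j ⊆ U W := by
      intro W j hj
      obtain ⟨k, hk, hjk⟩ := Set.mem_iUnion₂.mp hj
      exact (hcclosed k j hjk).trans (Set.subset_iUnion₂ (s := fun k _ => cset k) k hk)
    have hcsubU : ∀ (W : Set ι) (j : ι), j ∈ W → cset j ⊆ U W := by
      intro W j hj
      exact Set.subset_iUnion₂ (s := fun k _ => cset k) j hj
    -- decomposition facts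
    have hMapπ : ∀ S : Set ι, (∀ j ∈ S, D j ⊆ S) → Submodule.map π (MS S) = N ⊓ MS S := by
      intro S hS
      apply le_antisymm
      · rintro y ⟨x, hx, rfl⟩
        exact ⟨hπmem x, hinvπ S hS ⟨x, hx, rfl⟩⟩
      · rintro x ⟨hxN, hxS⟩
        exact ⟨x, hxS, hπid x hxN⟩
    have hsplitS : ∀ S : Set ι, (∀ j ∈ S, D j ⊆ S) →
        (N ⊓ MS S) ⊔ (N' ⊓ MS S) = MS S := by
      intro S hS
      apply le_antisymm (sup_le inf_le_right inf_le_right)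
      intro x hx
      rw [Submodule.mem_sup]
      exact ⟨π x, ⟨hπmem x, hinvπ S hS ⟨x, hx, rfl⟩⟩,
        π' x, ⟨hπ'mem x, hinvπ' S hS ⟨x, hx, rfl⟩⟩, hππ' x⟩
    have hdisjS : ∀ S : Set ι, (N ⊓ MS S) ⊓ (N' ⊓ MS S) = ⊥ := by
      intro S
      rw [eq_bot_iff]
      calc (N ⊓ MS S) ⊓ (N' ⊓ MS S) ≤ N ⊓ N' :=
            inf_le_inf inf_le_left inf_le_left
        _ = ⊥ := disjoint_iff.mp hcompl.disjoint
    have hMScompl : ∀ S : Set ι, IsCompl (MS S) (MS Sᶜ) := by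
      intro S
      constructor
      · exact WalkerAux.disjoint_biSup_of_iSupIndep hint.submodule_iSupIndep disjoint_compl_right
      · rw [codisjoint_iff, ← MS_union, Set.union_compl_self]
        have : MS Set.univ = ⨆ i, G i := by
          simp only [hMS]
          exact iSup_congr fun i => iSup_pos (Set.mem_univ i)
        rw [this, hint.submodule_iSup_eq_top]
    have MS_iUnion : ∀ {β : Type u} (f : β → Set ι), MS (⋃ b, f b) = ⨆ b, MS (f b) := by
      intro β f
      apply le_antisymm
      · refine iSup₂_le fun a ha => ?_
        obtain ⟨b, hb⟩ := Set.mem_iUnion.mp ha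
        exact le_iSup_of_le b (le_iSup₂ (f := fun k (_ : k ∈ f b) => G k) a hb)
      · exact iSup_le fun b => MS_mono (Set.subset_iUnion f b)
    -- the chains
    set A : ι → Submodule R M := fun i => N ⊓ MS (U {j : ι | j < i}) with hA
    set B : ι → Submodule R M := fun i => N ⊓ MS (U {j : ι | j ≤ i}) with hB
    have hAB : ∀ i, A i ≤ B i := fun i =>
      inf_le_inf_left N (MS_mono (hUmono fun j (hj : j < i) => le_of_lt hj))
    set K : ι → Submodule R M := fun i =>
      (N' ⊓ MS (U {j : ι | j < i})) ⊔ MS (U {j : ι | j < i})ᶜ with hK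
    have hKcompl : ∀ i, IsCompl (A i) (K i) := fun i =>
      WalkerAux.isCompl_step (hMScompl (U {j : ι | j < i})) inf_le_right inf_le_right
        (hdisjS _) (hsplitS _ (hUclosed _))
    set C : ι → Submodule R M := fun i => B i ⊓ K i with hC
    have hACB : ∀ i, A i ⊔ C i = B i := by
      intro i
      have h1 : (A i ⊔ K i) ⊓ B i = A i ⊔ K i ⊓ B i := sup_inf_assoc_of_le (K i) (hAB i)
      rw [codisjoint_iff.mp (hKcompl i).codisjoint, top_inf_eq] at h1
      show A i ⊔ B i ⊓ K i = B i
      rw [inf_comm (B i) (K i)]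
      exact h1.symm
    have hACdisj : ∀ i, A i ⊓ C i = ⊥ := by
      intro i
      rw [eq_bot_iff]
      calc A i ⊓ C i ≤ A i ⊓ K i := inf_le_inf_left _ inf_le_right
        _ = ⊥ := disjoint_iff.mp (hKcompl i).disjoint
    have hCB : ∀ i, C i ≤ B i := fun i => inf_le_left
    have hCle : ∀ i, C i ≤ N := fun i => (hCB i).trans inf_le_left
    have hBA : ∀ i i', i < i' → B i ≤ A i' := by
      intro i i' h
      exact inf_le_inf_left N (MS_mono (hUmono fun j (hj : j ≤ i) => lt_of_le_of_lt hj h))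
    -- A as union of earlier B's
    have hA_eq : ∀ i, A i = ⨆ j ∈ {j : ι | j < i}, B j := by
      intro i
      apply le_antisymm
      · rcases Set.eq_empty_or_nonempty {j : ι | j < i} with he | hnei
        · have hUe : U {j : ι | j < i} = ∅ := by
            rw [hU, he]
            simp
          have : A i = ⊥ := by
            simp only [hA]
            rw [hUe]
            simp [hMS]
          rw [this]
          exact bot_le
        · have : Nonempty ↥{j : ι | j < i} := hnei.to_subtype
          intro x hx
          obtain ⟨hxN, hxMS⟩ := hx
          have hdecomp : U {j : ι | j < i} =
              ⋃ j : ↥{j : ι | j < i}, U {k : ι | k ≤ j.1} := by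
            apply Set.Subset.antisymm
            · refine Set.iUnion₂_subset fun j hj => ?_
              refine (hcsubU {k : ι | k ≤ j} j le_rfl).trans ?_
              exact Set.subset_iUnion (fun j : ↥{j : ι | j < i} => U {k : ι | k ≤ j.1}) ⟨j, hj⟩
            · refine Set.iUnion_subset fun j => ?_
              exact hUmono fun k (hk : k ≤ j.1) => lt_of_le_of_lt hk j.2
          have hdir : Directed (· ≤ ·)
              (fun j : ↥{j : ι | j < i} => MS (U {k : ι | k ≤ j.1})) := by
            intro j1 j2
            rcases le_total j1.1 j2.1 with h | h
            · exact ⟨j2, MS_mono (hUmono fun k (hk : k ≤ j1.1) => hk.trans h), le_rfl⟩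
            · exact ⟨j1, le_rfl, MS_mono (hUmono fun k (hk : k ≤ j2.1) => hk.trans h)⟩
          rw [hdecomp, MS_iUnion] at hxMS
          obtain ⟨j, hj⟩ := (Submodule.mem_iSup_of_directed _ hdir).mp hxMS
          have hxB : x ∈ B j.1 := ⟨hxN, hj⟩
          exact le_iSup₂ (f := fun j (_ : j ∈ {j : ι | j < i}) => B j) j.1 j.2 hxB
      · exact iSup₂_le fun j hj => hBA j i hj
    -- every element of N lies in some B i
    have hdirB : Directed (· ≤ ·) fun i : ι => MS (U {j : ι | j ≤ i}) := by
      intro i1 i2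
      rcases le_total i1 i2 with h | h
      · exact ⟨i2, MS_mono (hUmono fun k (hk : k ≤ i1) => hk.trans h), le_rfl⟩
      · exact ⟨i1, le_rfl, MS_mono (hUmono fun k (hk : k ≤ i2) => hk.trans h)⟩
    have hsupB : ∀ x ∈ N, ∃ i : ι, x ∈ B i := by
      intro x hx
      have h1 : (⊤ : Submodule R M) ≤ ⨆ i : ι, MS (U {j : ι | j ≤ i}) := by
        rw [← hint.submodule_iSup_eq_top]
        refine iSup_le fun i => le_iSup_of_le i ?_
        have hiU : i ∈ U {j : ι | j ≤ i} :=
          Set.mem_biUnion (le_refl i) (hcmem i)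
        exact le_iSup₂ (f := fun k (_ : k ∈ U {j : ι | j ≤ i}) => G k) i hiU
      obtain ⟨i, hi⟩ := (Submodule.mem_iSup_of_directed _ hdirB).mp (h1 trivial)
      exact ⟨i, hx, hi⟩
    have hBsupC : ∀ i : ι, B i ≤ ⨆ j : ι, C j := by
      intro i
      induction i using WellFoundedLT.induction with
      | _ i ih =>
        rw [← hACB i]
        refine sup_le ?_ (le_iSup C i)
        rw [hA_eq i]
        exact iSup₂_le fun j hj => ih j hj
    have hCsup : (⨆ j : ι, C j) = N := by
      apply le_antisymm (iSup_le fun j => hCle j)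
      intro x hx
      obtain ⟨i, hi⟩ := hsupB x hx
      exact hBsupC i hi
    -- independence of the C family
    have hmain : ∀ s : Finset ι, ∀ i : ι, i ∉ s → ∀ x, x ∈ C i →
        x ∈ (⨆ j ∈ s, C j) → x = 0 := by
      intro s
      induction s using Finset.strongInduction with
      | _ s ih =>
        intro i his x hxC hxs
        rcases s.eq_empty_or_nonempty with rfl | hnes
        · simpa using hxs
        · set m := s.max' hnes with hm
          have hms : m ∈ s := s.max'_mem hnes
          rcases lt_trichotomy m i with hmi | hmieq | him
          · have hle : (⨆ j ∈ s, C j) ≤ A i :=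
              iSup₂_le fun j hj => (hCB j).trans (hBA j i ((s.le_max' j hj).trans_lt hmi))
            have hx0 : x ∈ A i ⊓ C i := ⟨hle hxs, hxC⟩
            rw [hACdisj i] at hx0
            simpa using hx0
          · exact absurd (hmieq ▸ hms) his
          · have hsplit2 : (⨆ j ∈ s, C j) = C m ⊔ ⨆ j ∈ s.erase m, C j := by
              conv_lhs => rw [← Finset.insert_erase hms]
              rw [Finset.iSup_insert]
            rw [hsplit2, Submodule.mem_sup] at hxs
            obtain ⟨z, hz, y, hy, hzy⟩ := hxs
            have hyA : y ∈ A m := by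
              have hle : (⨆ j ∈ s.erase m, C j) ≤ A m := by
                refine iSup₂_le fun j hj => ?_
                have hjs := Finset.mem_of_mem_erase hj
                have hjm : j ≠ m := Finset.ne_of_mem_erase hj
                exact (hCB j).trans (hBA j m (lt_of_le_of_ne (s.le_max' j hjs) hjm))
              exact hle hy
            have hxA : x ∈ A m := (hCB i).trans (hBA i m him) hxC
            have hz0 : z = 0 := by
              have hzAm : z ∈ A m := by
                have : z = x - y := by
                  rw [← hzy]
                  abel
                rw [this]
                exact sub_mem hxA hyA
              have : z ∈ A m ⊓ C m := ⟨hzAm, hz⟩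
              rw [hACdisj m] at this
              simpa using this
            rw [hz0, zero_add] at hzy
            refine ih (s.erase m) (Finset.erase_ssubset hms) i
              (fun h => his (Finset.mem_of_mem_erase h)) x hxC ?_
            rw [← hzy]
            exact hy
    have hCindep : iSupIndep C := by
      intro i
      rw [Submodule.disjoint_def]
      intro x hxC hxS
      rw [iSup_subtype'] at hxS
      obtain ⟨t, ht⟩ := Submodule.mem_iSup_iff_exists_finset.mp hxS
      have ht' : x ∈ ⨆ j ∈ t.image Subtype.val, C j := by
        refine (iSup₂_le fun j hj => ?_ : (⨆ j ∈ t, C j.1) ≤ _) ht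
        exact le_iSup₂ (f := fun k (_ : k ∈ t.image Subtype.val) => C k) j.1
          (Finset.mem_image_of_mem _ hj)
      have hti : i ∉ t.image Subtype.val := by
        simp only [Finset.mem_image]
        rintro ⟨j, _, hj⟩
        exact j.2 hj
      exact hmain (t.image Subtype.val) i hti x hxC ht'
    -- the retraction onto C i
    set ρ : ι → (M →ₗ[R] M) := fun i =>
      (K i).subtype ∘ₗ (K i).linearProjOfIsCompl (A i) (hKcompl i).symm with hρ
    have hρ0 : ∀ i, ∀ x ∈ A i, ρ i x = 0 := by
      intro i x hx
      show (K i).subtype ((K i).projectionOnto (A i) (hKcompl i).symm x) = 0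
      rw [Submodule.projectionOnto_apply_of_mem_right (hKcompl i).symm hx]
      rfl
    have hρid : ∀ i, ∀ x ∈ K i, ρ i x = x := by
      intro i x hx
      show (K i).subtype ((K i).linearProjOfIsCompl (A i) (hKcompl i).symm x) = x
      have h1 : (K i).linearProjOfIsCompl (A i) (hKcompl i).symm ((⟨x, hx⟩ : K i) : M)
          = ⟨x, hx⟩ := Submodule.linearProjOfIsCompl_apply_left (hKcompl i).symm ⟨x, hx⟩
      rw [show x = ((⟨x, hx⟩ : K i) : M) from rfl, h1]
      rfl
    have hρmem : ∀ i x, ρ i x ∈ K i := fun i x =>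
      ((K i).linearProjOfIsCompl (A i) (hKcompl i).symm x).2
    have hρsub : ∀ i x, x - ρ i x ∈ A i := by
      intro i x
      have h1 := Submodule.projection_add_projection_eq_self (hKcompl i) x
      have h2 : x - ρ i x = (((A i).linearProjOfIsCompl (K i) (hKcompl i)) x : M) :=
        sub_eq_iff_eq_add.mpr h1.symm
      rw [h2]
      exact (((A i).linearProjOfIsCompl (K i) (hKcompl i)) x).2
    -- decomposition of the filtration step
    have hUsplit : ∀ i : ι, U {j : ι | j ≤ i} = U {j : ι | j < i} ∪ cset i := by
      intro i
      apply Set.Subset.antisymm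
      · refine Set.iUnion₂_subset fun j hj => ?_
        rcases lt_or_eq_of_le (hj : j ≤ i) with h | rfl
        · exact (hcsubU {j : ι | j < i} j h).trans Set.subset_union_left
        · exact Set.subset_union_right
      · refine Set.union_subset (hUmono fun j (hj : j < i) => le_of_lt hj) ?_
        exact hcsubU {j : ι | j ≤ i} i le_rfl
    have hmapA : ∀ i, Submodule.map π (MS (U {j : ι | j < i})) = A i := fun i =>
      hMapπ _ (hUclosed _)
    have hmapB : ∀ i, Submodule.map π (MS (U {j : ι | j ≤ i})) = B i := fun i =>
      hMapπ _ (hUclosed _)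
    have hmapρB : ∀ i, Submodule.map (ρ i) (B i) = C i := by
      intro i
      apply le_antisymm
      · rintro y ⟨x, hx, rfl⟩
        have h1 : ρ i x ∈ K i := hρmem i x
        have h2 : ρ i x ∈ B i := by
          have h3 := Submodule.sub_mem (B i) hx (hAB i (hρsub i x))
          rwa [sub_sub_cancel] at h3
        exact ⟨h2, h1⟩
      · intro y hy
        exact ⟨y, hy.1, hρid i y hy.2⟩
    have hCmap : ∀ i, C i = Submodule.map (ρ i ∘ₗ π) (MS (cset i)) := by
      intro i
      have h1 : C i = Submodule.map (ρ i) (Submodule.map π (MS (U {j : ι | j ≤ i}))) := by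
        rw [hmapB, hmapρB]
      rw [hUsplit i, MS_union, Submodule.map_sup, Submodule.map_sup, hmapA] at h1
      have h2 : Submodule.map (ρ i) (A i) = ⊥ := by
        rw [eq_bot_iff]
        rintro y ⟨x, hx, rfl⟩
        rw [hρ0 i x hx]
        exact Submodule.zero_mem ⊥
      rw [h2, bot_sup_eq, ← Submodule.map_comp] at h1
      exact h1
    -- final generating sets
    set T : ι → Set M := fun i => (ρ i ∘ₗ π) '' (⋃ j ∈ cset i, gens j) with hT
    have hTspan : ∀ i, Submodule.span R (T i) = C i := by
      intro i
      simp only [hT]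
      rw [← Submodule.map_span, ← MS_span, ← hCmap]
    have hTcard : ∀ i, #(T i) ≤ κ := fun i =>
      Cardinal.mk_image_le.trans (WalkerAux.card_biUnion_le hκ (hccard i) hgcard)
    -- assembly
    have hinj := N.injective_subtype
    have hrw : ∀ j : ι, Submodule.map N.subtype ((C j).comap N.subtype) = C j := fun j => by
      rw [Submodule.map_comap_subtype, inf_eq_right.mpr (hCle j)]
    refine ⟨ι, fun i => (C i).comap N.subtype, ?_, ?_⟩
    · have key : ∀ _ : DecidableEq ι, DirectSum.IsInternal fun i => (C i).comap N.subtype := by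
        intro de
        rw [DirectSum.isInternal_submodule_iff_iSupIndep_and_iSup_eq_top]
        constructor
        · intro i
          rw [disjoint_iff]
          apply Submodule.map_injective_of_injective hinj
          rw [Submodule.map_bot, Submodule.map_inf _ hinj]
          simp only [Submodule.map_iSup]
          rw [hrw i]
          have h4 : (⨆ j, ⨆ (_ : j ≠ i), Submodule.map N.subtype ((C j).comap N.subtype))
              = ⨆ j, ⨆ (_ : j ≠ i), C j :=
            iSup_congr fun j => iSup_congr fun _ => hrw j
          rw [h4]
          exact disjoint_iff.mp (hCindep i)
        · apply Submodule.map_injective_of_injective hinj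
          rw [Submodule.map_iSup, Submodule.map_top, Submodule.range_subtype]
          have h5 : (⨆ j, Submodule.map N.subtype ((C j).comap N.subtype)) = ⨆ j, C j :=
            iSup_congr fun j => hrw j
          rw [h5, hCsup]
      exact key (Classical.decEq ι)
    · intro i
      exact WalkerAux.generatedLE_comap N (C i) (hCle i) (T i) (hTspan i) (hTcard i)
end

section
/- Let R be a ring and μ an infinite regular cardinal. Let 𝒞 = (C_α, f_{βα}: C_α → C_β | α ≤ β < μ) be a well-ordered directed system of right R-modules indexed by μ. Let λ be a cardinal such that λ^μ > λ^{<μ} = λ ≥ |R| and such that every C_α is λ-presented. Put N = ⊕_{α<μ} C_α and C = lim 𝒞 (the direct limit). Then there exist a module L, a submodule D of L, and an epimorphism π: N^(λ^μ) → L such that: (1) there is a short exact sequence 0 → D → L → C^(λ^μ) → 0 with |D| ≤ λ; and (2) for every finite subset S of λ^μ, the module π(N^(S)) is a direct summand of L and decomposes as a direct sum of modules each isomorphic to some module in {C_α | α < μ}. -/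
universe u

open Cardinal DirectSum

open scoped Classical
set_option linter.unusedSectionVars false
set_option linter.unusedVariables false
set_option maxHeartbeats 1000000

namespace TreeAux
variable {R : Type u} [Ring R] {ι : Type u} [LinearOrder ι] [WellFoundedLT ι] [DecidableEq ι]
  {G : ι → Type u} [∀ i, AddCommGroup (G i)] [∀ i, Module R (G i)]
  (f : ∀ i j, i ≤ j → G i →ₗ[R] G j)
  {Λ : Type u}

variable (ι Λ) in
abbrev Node : Type u := Σ k : ι, {i : ι // i < k} → Λ

variable (G Λ) in
abbrev P : Type u := ∀ t : Node ι Λ, G t.1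

def restr (β : ι → Λ) (k : ι) : {i : ι // i < k} → Λ := fun m => β m.1

lemma restr_eq {β β' : ι → Λ} {k : ι} (h : ∀ c, c < k → β c = β' c) :
    restr β k = restr β' k :=
  funext fun m => h m.1 m.2

lemma restr_ne {β β' : ι → Λ} {c k : ι} (hck : c < k) (h : β c ≠ β' c) :
    restr β k ≠ restr β' k := fun he => h (congrFun he ⟨c, hck⟩)

noncomputable def ray (β : ι → Λ) (i : ι) : G i →ₗ[R] P G Λ where
  toFun x t := if h : i ≤ t.1 ∧ t.2 = restr β t.1 then f i t.1 h.1 x else 0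
  map_add' x y := by
    funext t
    by_cases h : i ≤ t.1 ∧ t.2 = restr β t.1 <;> simp [h]
  map_smul' r x := by
    funext t
    by_cases h : i ≤ t.1 ∧ t.2 = restr β t.1 <;> simp [h]

lemma ray_apply (β : ι → Λ) (i : ι) (x : G i) (t : Node ι Λ) :
    ray f β i x t = if h : i ≤ t.1 ∧ t.2 = restr β t.1 then f i t.1 h.1 x else 0 := rfl

lemma ray_rewrite {β β' : ι → Λ} {d D i : ι} (hsys : DirectedSystem G fun i j h => f i j h)
    (h1 : ∀ c, c < d → β c = β' c) (h2 : β d ≠ β' d) (hi : i ≤ d) (hdD : d < D)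
    (hsucc : ∀ k, d < k → D ≤ k) (x : G i) :
    ray f β i x - ray f β D (f i D (hi.trans hdD.le) x)
      = ray f β' i x - ray f β' D (f i D (hi.trans hdD.le) x) := by
  haveI := hsys
  funext t
  obtain ⟨k, s⟩ := t
  simp only [Pi.sub_apply, ray_apply]
  rcases le_or_gt k d with hk | hk
  · have hD : ¬ D ≤ k := fun h => absurd (hdD.trans_le h) (not_lt.mpr hk)
    have req : restr β k = restr β' k :=
      restr_eq fun c hc => h1 c (hc.trans_le hk)
    by_cases hik : i ≤ k <;> by_cases hs : s = restr β k <;>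
      simp [hik, hD, ← req, hs]
  · have hD : D ≤ k := hsucc k hk
    have hik : i ≤ k := hi.trans hk.le
    have rne : restr β k ≠ restr β' k := restr_ne hk h2
    by_cases hs : s = restr β k
    · have hs' : ¬ s = restr β' k := fun h => rne (hs ▸ h)
      rw [dif_pos ⟨hik, hs⟩, dif_pos ⟨hD, hs⟩, dif_neg (fun h => hs' h.2),
        dif_neg (fun h => hs' h.2), Module.DirectedSystem.map_map (f := f), sub_self, sub_self]
    · by_cases hs' : s = restr β' k
      · rw [dif_neg (fun h => hs h.2), dif_neg (fun h => hs h.2),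
          dif_pos ⟨hik, hs'⟩, dif_pos ⟨hD, hs'⟩,
          Module.DirectedSystem.map_map (f := f), sub_self, sub_self]
      · rw [dif_neg (fun h => hs h.2), dif_neg (fun h => hs h.2),
          dif_neg (fun h => hs' h.2), dif_neg (fun h => hs' h.2)]

noncomputable def rayN (β : ι → Λ) : (⨁ i, G i) →ₗ[R] P G Λ :=
  DirectSum.toModule R ι (P G Λ) (ray f β)

@[simp] lemma rayN_lof (β : ι → Λ) (i : ι) (x : G i) :
    rayN f β (DirectSum.lof R ι G i x) = ray f β i x := by
  rw [rayN, DirectSum.toModule_lof]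

def Aset : Option ι → Set ι
  | none => Set.univ
  | some d => Set.Ioi d

@[simp] lemma Aset_none : Aset (none : Option ι) = Set.univ := rfl
@[simp] lemma Aset_some (d : ι) : Aset (some d) = Set.Ioi d := rfl
@[simp] lemma mem_Aset_some {d k : ι} : k ∈ Aset (some d) ↔ d < k := Iff.rfl

noncomputable def Tail (β : ι → Λ) (o : Option ι) : Submodule R (P G Λ) :=
  ⨆ i : ↥(Aset o), LinearMap.range (ray f β i.1)

lemma range_ray_le_tail (β : ι → Λ) {o : Option ι} {i : ι} (hi : i ∈ Aset o) :
    LinearMap.range (ray f β i) ≤ Tail f β o :=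
  le_iSup (fun i : ↥(Aset o) => LinearMap.range (ray f β i.1)) ⟨i, hi⟩

lemma tail_le_tail_none (β : ι → Λ) (o : Option ι) : Tail f β o ≤ Tail f β none :=
  iSup_le fun i => range_ray_le_tail f β (by trivial)

lemma range_rayN_eq (β : ι → Λ) :
    LinearMap.range (rayN f β) = Tail f β none := by
  apply le_antisymm
  · rintro _ ⟨y, rfl⟩
    induction y using DirectSum.induction_on with
    | zero => simp
    | of i x =>
        rw [← DirectSum.lof_eq_of R, rayN_lof]
        exact range_ray_le_tail f β (by trivial) ⟨x, rfl⟩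
    | add x y hx hy =>
        rw [map_add]; exact Submodule.add_mem _ hx hy
  · refine iSup_le fun i => ?_
    rintro _ ⟨x, rfl⟩
    exact ⟨DirectSum.lof R ι G i.1 x, by rw [rayN_lof]⟩

lemma range_ray_absorb {β β' : ι → Λ} {d D i : ι}
    (hsys : DirectedSystem G fun i j h => f i j h)
    (h1 : ∀ c, c < d → β c = β' c) (h2 : β d ≠ β' d) (hi : i ≤ d) (hdD : d < D)
    (hsucc : ∀ k, d < k → D ≤ k) :
    LinearMap.range (ray f β i) ≤ Tail f β' none ⊔ Tail f β (some d) := by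
  rintro _ ⟨x, rfl⟩
  have key := ray_rewrite f hsys h1 h2 hi hdD hsucc x
  have : ray f β i x = (ray f β' i x - ray f β' D (f i D (hi.trans hdD.le) x))
      + ray f β D (f i D (hi.trans hdD.le) x) := by
    rw [← key]; abel
  rw [this]
  apply Submodule.add_mem
  · apply Submodule.mem_sup_left
    exact Submodule.sub_mem _ (range_ray_le_tail f β' (by trivial) ⟨x, rfl⟩)
      (range_ray_le_tail f β' (by trivial) ⟨_, rfl⟩)
  · exact Submodule.mem_sup_right (range_ray_le_tail f β (by exact hdD) ⟨_, rfl⟩)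

variable [Nonempty ι]

lemma sum_support_lof' {κ : Type u} [DecidableEq κ] {H : κ → Type u} [∀ i, AddCommGroup (H i)]
    [∀ i, Module R (H i)] (y : ⨁ i, H i) :
    ∑ i ∈ DFinsupp.support y, DirectSum.lof R κ H i (y i) = y := by
  have := DirectSum.sum_support_of (β := H) y
  simpa [DirectSum.lof_eq_of] using this


section Pi
variable {J : Type u} (b : J → ι → Λ)

noncomputable def piTree : (J →₀ ⨁ i, G i) →ₗ[R] P G Λ :=
  Finsupp.lsum ℕ fun j => rayN f (b j)

@[simp] lemma piTree_single (j : J) (y : ⨁ i, G i) :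
    piTree f b (Finsupp.single j y) = rayN f (b j) y := by
  rw [piTree, Finsupp.lsum_single]

lemma piTree_apply (x : J →₀ ⨁ i, G i) :
    piTree f b x = ∑ j ∈ x.support, rayN f (b j) (x j) := by
  rw [piTree, Finsupp.lsum_apply]
  rfl

lemma map_supported (S : Set J) :
    (Finsupp.supported (⨁ i, G i) R S).map (piTree f b)
      = ⨆ j : ↥S, LinearMap.range (rayN f (b j.1)) := by
  apply le_antisymm
  · rintro _ ⟨x, hx, rfl⟩
    rw [piTree_apply]
    apply Submodule.sum_mem
    intro j hj
    have hjS : j ∈ S := (Finsupp.mem_supported R x).mp hx (Finset.mem_coe.mpr hj)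
    exact le_iSup (fun j : ↥S => LinearMap.range (rayN f (b j.1))) ⟨j, hjS⟩ ⟨x j, rfl⟩
  · refine iSup_le fun j => ?_
    rintro _ ⟨y, rfl⟩
    exact ⟨Finsupp.single j.1 y, Finsupp.single_mem_supported R y j.2, by simp⟩

lemma range_piTree :
    LinearMap.range (piTree f b) = ⨆ j : J, LinearMap.range (rayN f (b j)) := by
  apply le_antisymm
  · rintro _ ⟨x, rfl⟩
    rw [piTree_apply]
    apply Submodule.sum_mem
    intro j _
    exact le_iSup (fun j : J => LinearMap.range (rayN f (b j))) j ⟨x j, rfl⟩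
  · refine iSup_le fun j => ?_
    rintro _ ⟨y, rfl⟩
    exact ⟨Finsupp.single j y, by simp⟩


noncomputable def splitT (j j' : J) : ι :=
  if h : {c : ι | b j c ≠ b j' c}.Nonempty then wellFounded_lt.min _ h
  else Classical.arbitrary ι

lemma splitT_spec {j j' : J} (h : b j ≠ b j') :
    b j (splitT b j j') ≠ b j' (splitT b j j') ∧
      ∀ c, c < splitT b j j' → b j c = b j' c := by
  have hne : {c : ι | b j c ≠ b j' c}.Nonempty := by
    by_contra hc
    exact h (funext fun c => by
      by_contra hcc
      exact hc ⟨c, hcc⟩)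
  rw [splitT, dif_pos hne]
  constructor
  · exact wellFounded_lt.min_mem _ hne
  · intro c hc
    by_contra hcc
    exact wellFounded_lt.not_lt_min _ (hcc : c ∈ {c : ι | b j c ≠ b j' c}) hc

def Sep (S : Finset J) (δ : J → Option ι) : Prop :=
  ∀ j ∈ S, ∀ j' ∈ S, j ≠ j' → ∀ k : ι, k ∈ Aset (δ j) → k ∈ Aset (δ j') →
    restr (b j) k ≠ restr (b j') k

lemma exists_delta (hsys : DirectedSystem G fun i j h => f i j h)
    (hb : Function.Injective b)
    (hsucc : ∀ d : ι, ∃ D, d < D ∧ ∀ k, d < k → D ≤ k) (S : Finset J) :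
    ∃ δ : J → Option ι, Sep b S δ ∧
      S.sup (fun j => Tail f (b j) (δ j)) = S.sup (fun j => Tail f (b j) none) := by
  classical
  induction S using Finset.induction_on with
  | empty => exact ⟨fun _ => none, fun j hj => absurd hj (Finset.notMem_empty j), by simp⟩
  | @insert a S haS ih =>
    obtain ⟨δ, hsep, hsup⟩ := ih
    rcases S.eq_empty_or_nonempty with rfl | hSne
    · refine ⟨fun _ => none, ?_, rfl⟩
      intro j hj j' hj' hne k _ _
      have hj : j = a := by simpa using hj
      have hj' : j' = a := by simpa using hj'
      exact absurd (hj.trans hj'.symm) hne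
    · set da : ι := (S.image fun j' => splitT b a j').max' (hSne.image _) with hda
      have hda_mem : ∃ j' ∈ S, splitT b a j' = da := by
        have := (S.image fun j' => splitT b a j').max'_mem (hSne.image _)
        rw [Finset.mem_image] at this
        obtain ⟨j', hj', hj'eq⟩ := this
        exact ⟨j', hj', hj'eq⟩
      have hda_le : ∀ j' ∈ S, splitT b a j' ≤ da := fun j' hj' =>
        Finset.le_max' _ _ (Finset.mem_image_of_mem _ hj')
      set δ' : J → Option ι := Function.update δ a (some da) with hδ'
      have hδ'S : ∀ j ∈ S, δ' j = δ j := fun j hj =>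
        Function.update_of_ne (fun h : j = a => haS (by rw [← h]; exact hj)) _ _
      have hbne : ∀ j' ∈ S, b a ≠ b j' := fun j' hj' h =>
        haS (by rw [hb h]; exact hj')
      refine ⟨δ', ?_, ?_⟩
      · intro j hj j' hj' hne k hk hk'
        rcases Finset.mem_insert.mp hj with rfl | hjS
        · rcases Finset.mem_insert.mp hj' with rfl | hj'S
          · exact absurd rfl hne
          · -- j = a, j' ∈ S
            rw [hδ', Function.update_self] at hk
            have hk2 : da < k := hk
            have hsp := splitT_spec b (hbne j' hj'S)
            exact restr_ne ((hda_le j' hj'S).trans_lt hk2) hsp.1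
        · rcases Finset.mem_insert.mp hj' with rfl | hj'S
          · rw [hδ', Function.update_self] at hk'
            have hk2 : da < k := hk'
            have hsp := splitT_spec b (hbne j hjS)
            exact (restr_ne ((hda_le j hjS).trans_lt hk2) hsp.1).symm
          · rw [hδ'S j hjS] at hk; rw [hδ'S j' hj'S] at hk'
            exact hsep j hjS j' hj'S hne k hk hk'
      · rw [Finset.sup_insert, Finset.sup_insert]
        have hsame : S.sup (fun j => Tail f (b j) (δ' j)) = S.sup (fun j => Tail f (b j) (δ j)) :=
          Finset.sup_congr rfl fun j hj => by rw [hδ'S j hj]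
        rw [hsame, hsup, hδ', Function.update_self]
        apply le_antisymm
        · exact sup_le_sup_right (tail_le_tail_none f (b a) _) _
        · refine sup_le ?_ le_sup_right
          rw [Tail]
          refine iSup_le fun i => ?_
          rcases lt_or_ge da i.1 with hi | hi
          · exact le_trans (range_ray_le_tail f (b a) (o := some da) hi) le_sup_left
          · obtain ⟨j', hj'S, hj'eq⟩ := hda_mem
            obtain ⟨D, hdD, hDle⟩ := hsucc da
            have hsp := splitT_spec b (hbne j' hj'S)
            rw [hj'eq] at hsp
            have habs := range_ray_absorb f hsys (β := b a) (β' := b j')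
              hsp.2 hsp.1 hi hdD hDle
            refine habs.trans (sup_le ?_ ?_)
            · exact le_trans (Finset.le_sup (f := fun j => Tail f (b j) none) hj'S) le_sup_right
            · exact le_sup_left
end Pi

noncomputable def psi (k : ι) : (⨁ i, G i) →ₗ[R] G k :=
  DirectSum.toModule R ι (G k) fun i => if h : i ≤ k then f i k h else 0

@[simp] lemma psi_lof (k i : ι) (x : G i) :
    psi f k (DirectSum.lof R ι G i x) = if h : i ≤ k then f i k h x else 0 := by
  rw [psi, DirectSum.toModule_lof]
  by_cases h : i ≤ k <;> simp [h]

lemma sum_support_lof (y : ⨁ i, G i) :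
    ∑ i ∈ DFinsupp.support y, DirectSum.lof R ι G i (y i) = y := by
  have := DirectSum.sum_support_of (β := G) y
  simpa [DirectSum.lof_eq_of] using this

lemma psi_apply_eq_sum (k : ι) (y : ⨁ i, G i) :
    psi f k y = ∑ i ∈ DFinsupp.support y, (if h : i ≤ k then f i k h (y i) else 0) := by
  conv_lhs => rw [← sum_support_lof (R := R) y]
  rw [map_sum]
  exact Finset.sum_congr rfl fun i _ => by simp

lemma psi_compat {k k' : ι} (h : k ≤ k') (y : ⨁ i, G i)
    (hy : ∀ i, y i ≠ 0 → i ≤ k) (hsys : DirectedSystem G fun i j h => f i j h) :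
    psi f k' y = f k k' h (psi f k y) := by
  rw [psi_apply_eq_sum, psi_apply_eq_sum, map_sum]
  refine Finset.sum_congr rfl fun i hi => ?_
  have hik : i ≤ k := hy i (DFinsupp.mem_support_iff.mp hi)
  rw [dif_pos hik, dif_pos (hik.trans h),
    Module.DirectedSystem.map_map (f := f) hik h]

lemma psi_min (m : ι) (y : ⨁ i, G i) (hy : ∀ i, y i ≠ 0 → m ≤ i)
    (hsys : DirectedSystem G fun i j h => f i j h) :
    psi f m y = y m := by
  rw [psi_apply_eq_sum]
  by_cases hm : m ∈ DFinsupp.support y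
  · rw [Finset.sum_eq_single m]
    · rw [dif_pos le_rfl, Module.DirectedSystem.map_self (f := f)]
    · intro i hi hne
      rw [dif_neg]
      intro hik
      exact hne (le_antisymm hik (hy i (DFinsupp.mem_support_iff.mp hi)))
    · intro h; exact absurd hm h
  · rw [Finset.sum_eq_zero, eq_comm]
    · simpa using hm
    · intro i hi
      rw [dif_neg]
      intro hik
      exact hm (by
        have : i = m := le_antisymm hik (hy i (DFinsupp.mem_support_iff.mp hi))
        rwa [← this])

section Pi2
variable {J : Type u} (b : J → ι → Λ)

def SIG (S : Finset J) (δ : J → Option ι) : Type u :=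
  Σ j : {j : J // j ∈ S}, {i : ι // i ∈ Aset (δ j.1)}

noncomputable def Phi (S : Finset J) (δ : J → Option ι) :
    (⨁ p : SIG S δ, G p.2.1) →ₗ[R] P G Λ :=
  DirectSum.toModule R (SIG S δ) (P G Λ) fun p => ray f (b p.1.1) p.2.1

lemma range_Phi (S : Finset J) (δ : J → Option ι) :
    LinearMap.range (Phi f b S δ) = S.sup fun j => Tail f (b j) (δ j) := by
  apply le_antisymm
  · rintro _ ⟨w, rfl⟩
    induction w using DirectSum.induction_on with
    | zero => simp
    | of p x =>
        rw [← DirectSum.lof_eq_of R, Phi, DirectSum.toModule_lof]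
        have h1 : LinearMap.range (ray f (b p.1.1) p.2.1) ≤ Tail f (b p.1.1) (δ p.1.1) :=
          range_ray_le_tail f _ p.2.2
        exact (h1.trans (Finset.le_sup (f := fun j => Tail f (b j) (δ j)) p.1.2)) ⟨x, rfl⟩
    | add x y hx hy => rw [map_add]; exact Submodule.add_mem _ hx hy
  · refine Finset.sup_le fun j hj => ?_
    rw [Tail]
    refine iSup_le fun i => ?_
    rintro _ ⟨x, rfl⟩
    exact ⟨DirectSum.lof R (SIG S δ) (fun p => G p.2.1) ⟨⟨j, hj⟩, i⟩ x, by
      rw [Phi]; exact DirectSum.toModule_lof R _ _⟩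

lemma Phi_injective (S : Finset J) (δ : J → Option ι) (hsep : Sep b S δ)
    (hsys : DirectedSystem G fun i j h => f i j h) :
    Function.Injective (Phi f b S δ) := by
  haveI := hsys
  rw [← LinearMap.ker_eq_bot, Submodule.eq_bot_iff]
  intro w hw
  rw [LinearMap.mem_ker] at hw
  by_contra hw0
  have hne : (DFinsupp.support w).Nonempty := by
    rw [Finset.nonempty_iff_ne_empty]
    intro hemp
    exact hw0 (DFinsupp.support_eq_empty.mp hemp)
  have hlevne := hne.image (fun p : SIG S δ => p.2.1)
  obtain ⟨p0, hp0mem, hp0m⟩ :=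
    Finset.mem_image.mp (Finset.min'_mem _ hlevne)
  have hmin : ∀ p ∈ DFinsupp.support w, p0.2.1 ≤ p.2.1 := fun p hp => by
    rw [hp0m]
    exact Finset.min'_le _ _ (Finset.mem_image_of_mem _ hp)
  set t0 : Node ι Λ := ⟨p0.2.1, restr (b p0.1.1) p0.2.1⟩ with ht0
  have hsum : Phi f b S δ w = ∑ p ∈ DFinsupp.support w, ray f (b p.1.1) p.2.1 (w p) := by
    conv_lhs => rw [← sum_support_lof' (R := R) w]
    rw [map_sum]
    exact Finset.sum_congr rfl fun p _ => by rw [Phi, DirectSum.toModule_lof]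
  have heval : ∑ p ∈ DFinsupp.support w, ray f (b p.1.1) p.2.1 (w p) t0 = 0 := by
    rw [← Finset.sum_apply t0 (DFinsupp.support w) (fun p => ray f (b p.1.1) p.2.1 (w p)),
      ← hsum, hw]
    rfl
  rw [Finset.sum_eq_single p0] at heval
  · rw [ray_apply, dif_pos ⟨le_rfl, rfl⟩, Module.DirectedSystem.map_self (f := f)] at heval
    exact (DFinsupp.mem_support_iff.mp hp0mem) heval
  · intro p hp hpne
    rw [ray_apply, dif_neg]
    rintro ⟨hle, hs⟩
    have hpm : p.2.1 = p0.2.1 := le_antisymm hle (hmin p hp)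
    by_cases hj : p.1 = p0.1
    · apply hpne
      obtain ⟨j1, i1⟩ := p
      obtain ⟨j0, i0⟩ := p0
      simp only at hj hpm
      subst hj
      have : i1 = i0 := Subtype.ext hpm
      rw [this]
    · have hj' : p.1.1 ≠ p0.1.1 := fun h => hj (Subtype.ext h)
      have hsep' := hsep p.1.1 p.1.2 p0.1.1 p0.1.2 hj' p.2.1
        p.2.2 (by rw [hpm]; exact p0.2.2)
      rw [hpm] at hsep'
      exact hsep' hs.symm
  · intro h
    exact absurd hp0mem h

def POn (S : Finset J) : Submodule R (P G Λ) where
  carrier := {z | ∀ t : Node ι Λ, (∀ j ∈ S, t.2 ≠ restr (b j) t.1) → z t = 0}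
  add_mem' := fun hz hz' t ht => by
    rw [Pi.add_apply, hz t ht, hz' t ht, add_zero]
  zero_mem' := fun t _ => rfl
  smul_mem' := fun r z hz t ht => by rw [Pi.smul_apply, hz t ht, smul_zero]

def POff (S : Finset J) : Submodule R (P G Λ) where
  carrier := {z | ∀ t : Node ι Λ, (∃ j ∈ S, t.2 = restr (b j) t.1) → z t = 0}
  add_mem' := fun hz hz' t ht => by
    rw [Pi.add_apply, hz t ht, hz' t ht, add_zero]
  zero_mem' := fun t _ => rfl
  smul_mem' := fun r z hz t ht => by rw [Pi.smul_apply, hz t ht, smul_zero]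

lemma tail_le_POn (S : Finset J) {j : J} (hj : j ∈ S) :
    Tail f (b j) none ≤ POn b S := by
  refine iSup_le fun i => ?_
  rintro _ ⟨x, rfl⟩
  intro t ht
  rw [ray_apply, dif_neg]
  intro hcond
  exact ht j hj hcond.2

lemma tail_le_POff (S : Finset J) (hb : Function.Injective b) {j : J} (hjS : j ∉ S) {d : ι}
    (hd : ∀ j' ∈ S, splitT b j j' ≤ d) :
    Tail f (b j) (some d) ≤ POff b S := by
  refine iSup_le fun i => ?_
  rintro _ ⟨x, rfl⟩
  rintro t ⟨j', hj', heq⟩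
  rw [ray_apply, dif_neg]
  rintro ⟨hik, hs⟩
  have hne : b j ≠ b j' := fun h => hjS (by rw [hb h]; exact hj')
  have hsp := splitT_spec b hne
  have hdi : d < i.1 := i.2
  have hlt : splitT b j j' < t.1 := lt_of_le_of_lt (hd j' hj') (lt_of_lt_of_le hdi hik)
  exact (restr_ne hlt hsp.1) (hs.symm.trans heq)

lemma POn_inf_POff (S : Finset J) (z : P G Λ) (hzOn : z ∈ POn (R := R) b S)
    (hzOff : z ∈ POff (R := R) b S) :
    z = 0 := by
  funext t
  by_cases h : ∃ j ∈ S, t.2 = restr (b j) t.1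
  · exact hzOff t h
  · push_neg at h
    exact hzOn t h

lemma range_rayN_le_range_piTree (j : J) :
    LinearMap.range (rayN f (b j)) ≤ LinearMap.range (piTree f b) := by
  rintro _ ⟨y, rfl⟩
  exact ⟨Finsupp.single j y, by rw [piTree_single]⟩

lemma sup_compl (S : Finset J) (hb : Function.Injective b)
    (hsys : DirectedSystem G fun i j h => f i j h)
    (hsucc : ∀ d : ι, ∃ D, d < D ∧ ∀ k, d < k → D ≤ k)
    (dOut : J → ι)
    (hdOut : ∀ j ∉ S, ∀ j' ∈ S, splitT b j j' ≤ dOut j)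
    (hclose : ∀ j ∉ S, ∃ j' ∈ S, splitT b j j' = dOut j) :
    (S.sup fun j => Tail f (b j) none)
        ⊔ (⨆ j : {j : J // j ∉ S}, Tail f (b j.1) (some (dOut j.1)))
      = LinearMap.range (piTree f b) := by
  apply le_antisymm
  · apply sup_le
    · exact Finset.sup_le fun j _ => by
        rw [← range_rayN_eq]
        exact range_rayN_le_range_piTree f b j
    · refine iSup_le fun j => ?_
      refine le_trans (tail_le_tail_none f (b j.1) _) ?_
      rw [← range_rayN_eq]
      exact range_rayN_le_range_piTree f b j.1
  · rw [range_piTree]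
    refine iSup_le fun j => ?_
    rw [range_rayN_eq]
    by_cases hjS : j ∈ S
    · exact le_trans (Finset.le_sup (f := fun j => Tail f (b j) none) hjS) le_sup_left
    · rw [Tail]
      refine iSup_le fun i => ?_
      rcases lt_or_ge (dOut j) i.1 with hi | hi
      · refine le_trans (range_ray_le_tail f (b j) (o := some (dOut j)) hi) ?_
        exact le_trans (le_iSup (fun j : {j : J // j ∉ S} => Tail f (b j.1) (some (dOut j.1))) ⟨j, hjS⟩) le_sup_right
      · obtain ⟨j', hj'S, hj'eq⟩ := hclose j hjS
        obtain ⟨D, hdD, hDle⟩ := hsucc (dOut j)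
        have hne : b j ≠ b j' := fun h => hjS (by rw [hb h]; exact hj'S)
        have hsp := splitT_spec b hne
        rw [hj'eq] at hsp
        have habs := range_ray_absorb f hsys (β := b j) (β' := b j')
          hsp.2 hsp.1 hi hdD hDle
        refine habs.trans (sup_le ?_ ?_)
        · exact le_trans (Finset.le_sup (f := fun j => Tail f (b j) none) hj'S) le_sup_left
        · exact le_trans (le_iSup (fun j : {j : J // j ∉ S} => Tail f (b j.1) (some (dOut j.1))) ⟨j, hjS⟩) le_sup_right

end Pi2

variable [IsDirected ι (· ≤ ·)]

noncomputable def qN : (⨁ i, G i) →ₗ[R] Module.DirectLimit G f :=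
  DirectSum.toModule R ι _ fun i => Module.DirectLimit.of R ι G f i

@[simp] lemma qN_lof (i : ι) (x : G i) :
    qN f (DirectSum.lof R ι G i x) = Module.DirectLimit.of R ι G f i x := by
  rw [qN, DirectSum.toModule_lof]

lemma qN_surjective : Function.Surjective (qN f) := by
  intro z
  obtain ⟨i, x, h⟩ := Module.DirectLimit.exists_of z
  exact ⟨DirectSum.lof R ι G i x, by rw [qN_lof, h]⟩

lemma qN_eq_of_psi (k : ι) (y : ⨁ i, G i) (hy : ∀ i, y i ≠ 0 → i ≤ k) :
    qN f y = Module.DirectLimit.of R ι G f k (psi f k y) := by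
  rw [psi_apply_eq_sum, map_sum]
  conv_lhs => rw [← sum_support_lof (R := R) y]
  rw [map_sum]
  refine Finset.sum_congr rfl fun i hi => ?_
  rw [qN_lof, dif_pos (hy i (DFinsupp.mem_support_iff.mp hi)), Module.DirectLimit.of_f]

lemma qN_zero_exists (y : ⨁ i, G i) (h : qN f y = 0)
    (hsys : DirectedSystem G fun i j h => f i j h) :
    ∃ k, (∀ i, y i ≠ 0 → i ≤ k) ∧ psi f k y = 0 := by
  obtain ⟨k0, hk0⟩ : ∃ k0, ∀ i ∈ DFinsupp.support y, i ≤ k0 := by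
    obtain ⟨k0, hk0⟩ := Finset.exists_le (DFinsupp.support y)
    exact ⟨k0, hk0⟩
  have hsupp : ∀ i, y i ≠ 0 → i ≤ k0 := fun i hi => hk0 i (DFinsupp.mem_support_iff.mpr hi)
  rw [qN_eq_of_psi f k0 y hsupp] at h
  obtain ⟨k, hk0k, hzero⟩ := Module.DirectLimit.of.zero_exact h
  refine ⟨k, fun i hi => (hsupp i hi).trans hk0k, ?_⟩
  rw [psi_compat f hk0k y hsupp hsys, hzero]


lemma rayN_apply (β : ι → Λ) (y : ⨁ i, G i) (t : Node ι Λ) :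
    rayN f β y t = if t.2 = restr β t.1 then psi f t.1 y else 0 := by
  induction y using DirectSum.induction_on with
  | zero => rw [map_zero, map_zero]; split <;> rfl
  | of i x =>
      rw [← DirectSum.lof_eq_of R, rayN_lof, psi_lof, ray_apply]
      by_cases h1 : t.2 = restr β t.1 <;> by_cases h2 : i ≤ t.1 <;>
        simp [h1, h2]
  | add x y hx hy =>
      rw [map_add, map_add, Pi.add_apply, hx, hy]
      split <;> simp

noncomputable def truncFun (p : (⨁ i, G i) × Node ι Λ) : P G Λ := fun s =>
  if h : s.1 < p.2.1 then
    (if s.2 = (fun m : {i : ι // i < s.1} => p.2.2 ⟨m.1, lt_trans m.2 h⟩) then psi f s.1 p.1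
      else 0)
  else 0

lemma rayN_eq_trunc (hsys : DirectedSystem G fun i j h => f i j h) (β : ι → Λ)
    (y : ⨁ i, G i) (k0 : ι) (hsupp : ∀ i, y i ≠ 0 → i ≤ k0) (hpsi : psi f k0 y = 0) :
    rayN f β y = truncFun f (y, ⟨k0, restr β k0⟩) := by
  funext s
  rw [rayN_apply, truncFun]
  by_cases h : s.1 < k0
  · rw [dif_pos h]
    have hcond : (s.2 = restr β s.1)
        = (s.2 = fun m : {i : ι // i < s.1} => restr β k0 ⟨m.1, lt_trans m.2 h⟩) := rfl
    rw [hcond]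
  · rw [dif_neg h]
    split
    · rw [psi_compat f (not_lt.mp h) y hsupp hsys, hpsi, map_zero]
    · rfl

section Ker
variable {J : Type u} (b : J → ι → Λ)

noncomputable def qF : (J →₀ ⨁ i, G i) →ₗ[R] (J →₀ Module.DirectLimit G f) :=
  Finsupp.mapRange.linearMap (qN f)

lemma qF_surjective : Function.Surjective (qF f (J := J)) :=
  Finsupp.mapRange_surjective _ (map_zero _) (qN_surjective f)

lemma mem_ker_qF (x : J →₀ ⨁ i, G i) : x ∈ LinearMap.ker (qF f (J := J)) ↔
    ∀ j, qN f (x j) = 0 := by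
  rw [LinearMap.mem_ker]
  constructor
  · intro h j
    have := congrArg (fun z => z j) h
    simpa [qF, Finsupp.mapRange_apply] using this
  · intro h
    ext j
    simp [qF, Finsupp.mapRange_apply, h j]

lemma ker_piTree_le_ker_qF (hb : Function.Injective b)
    (hsys : DirectedSystem G fun i j h => f i j h)
    (hsucc : ∀ d : ι, ∃ D, d < D ∧ ∀ k, d < k → D ≤ k) :
    LinearMap.ker (piTree f b) ≤ LinearMap.ker (qF f) := by
  intro x hx
  rw [LinearMap.mem_ker] at hx
  rw [mem_ker_qF]
  intro j
  by_cases hj : j ∈ x.support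
  case neg =>
    rw [Finsupp.notMem_support_iff.mp hj, map_zero]
  case pos =>
  -- find a bound k0 for all supports and all split levels
  set bigT : Finset ι :=
    (x.support.sup fun j' => DFinsupp.support (x j')) ∪
      ((x.support ×ˢ x.support).image fun p => splitT b p.1 p.2) with hbigT
  obtain ⟨k0, hk0⟩ := Finset.exists_le bigT
  obtain ⟨k1, hk01, _⟩ := hsucc k0
  -- supports are bounded by k0
  have hsuppb : ∀ j' ∈ x.support, ∀ i, (x j') i ≠ 0 → i ≤ k0 := by
    intro j' hj' i hi
    refine hk0 i ?_
    refine Finset.mem_union_left _ ?_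
    exact Finset.le_sup (f := fun j' => DFinsupp.support (x j')) hj'
      (DFinsupp.mem_support_iff.mpr hi)
  -- distinct branches are separated at level k1
  have hsep : ∀ j' ∈ x.support, j' ≠ j → restr (b j') k1 ≠ restr (b j) k1 := by
    intro j' hj' hne
    have hbne : b j' ≠ b j := fun h => hne (hb h)
    have hsp := splitT_spec b hbne
    have hmem : splitT b j' j ∈ bigT := by
      refine Finset.mem_union_right _ ?_
      exact Finset.mem_image_of_mem _ (Finset.mk_mem_product hj' hj)
    exact restr_ne ((hk0 _ hmem).trans_lt hk01) hsp.1
  -- evaluate the relation at the node (k1, restr (b j) k1)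
  have heval := congrFun hx (⟨k1, restr (b j) k1⟩ : Node ι Λ)
  rw [piTree_apply] at heval
  rw [Finset.sum_apply, Pi.zero_apply] at heval
  rw [Finset.sum_eq_single j] at heval
  · rw [rayN_apply, if_pos rfl] at heval
    -- heval : psi f k1 (x j) = 0
    rw [qN_eq_of_psi f k1 (x j) (fun i hi => ((hsuppb j hj i hi).trans hk01.le)), heval,
      map_zero]
  · intro j' hj' hne
    rw [rayN_apply, if_neg]
    exact fun hc => hsep j' hj' hne hc.symm
  · intro h; exact absurd hj h

lemma rayN_mem_trunc_range (hsys : DirectedSystem G fun i j h => f i j h) (j : J)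
    (y : ⨁ i, G i) (hy : qN f y = 0) :
    rayN f (b j) y ∈ Set.range (truncFun f (Λ := Λ)) := by
  obtain ⟨k, hk1, hk2⟩ := qN_zero_exists f y hy hsys
  exact ⟨(y, ⟨k, restr (b j) k⟩), (rayN_eq_trunc f hsys (b j) y k hk1 hk2).symm⟩

end Ker

end TreeAux
namespace CardAux
variable {lam : Cardinal.{u}}

lemma card_finset_le {α : Type u} (h : #α ≤ lam) (hinf : ℵ₀ ≤ lam) : #(Finset α) ≤ lam := by
  cases finite_or_infinite α with
  | inl hfin =>
      haveI := hfin
      haveI := Fintype.ofFinite α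
      exact le_trans (Cardinal.mk_lt_aleph0_iff.mpr inferInstance).le hinf
  | inr hinf' => rw [Cardinal.mk_finset_of_infinite]; exact h

lemma card_sigma_le {α : Type u} {M : α → Type u} (hα : #α ≤ lam)
    (hM : ∀ a, #(M a) ≤ lam) (hinf : ℵ₀ ≤ lam) : #(Σ a, M a) ≤ lam := by
  rw [Cardinal.mk_sigma]
  calc Cardinal.sum (fun a => #(M a)) ≤ Cardinal.sum (fun _ : α => lam) :=
        Cardinal.sum_le_sum _ _ hM
    _ = #α * lam := Cardinal.sum_const' α lam
    _ ≤ lam * lam := mul_le_mul_left hα lam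
    _ = lam := Cardinal.mul_eq_self hinf

lemma card_prod_le {α β : Type u} (hα : #α ≤ lam) (hβ : #β ≤ lam) (hinf : ℵ₀ ≤ lam) :
    #(α × β) ≤ lam := by
  rw [Cardinal.mk_prod, Cardinal.lift_id, Cardinal.lift_id]
  calc #α * #β ≤ lam * lam := mul_le_mul' hα hβ
    _ = lam := Cardinal.mul_eq_self hinf

lemma card_finsupp_le {α M : Type u} [Zero M] (hα : #α ≤ lam) (hM : #M ≤ lam)
    (hinf : ℵ₀ ≤ lam) : #(α →₀ M) ≤ lam := by
  have hinj : Function.Injective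
      (fun x : α →₀ M => (x.support.image fun a => (a, x a) : Finset (α × M))) := by
    intro x y hxy
    have hxy' : x.support.image (fun a => (a, x a)) = y.support.image (fun a => (a, y a)) := hxy
    ext a
    by_cases hax : a ∈ x.support
    · have h1 : (a, x a) ∈ y.support.image fun a => (a, y a) := by
        rw [← hxy']; exact Finset.mem_image_of_mem _ hax
      obtain ⟨a', ha', heq⟩ := Finset.mem_image.mp h1
      have h2 : a' = a := congrArg Prod.fst heq
      subst h2
      exact (congrArg Prod.snd heq).symm
    · by_cases hay : a ∈ y.support
      · have h1 : (a, y a) ∈ x.support.image fun a => (a, x a) := by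
          rw [hxy']; exact Finset.mem_image_of_mem _ hay
        obtain ⟨a', ha', heq⟩ := Finset.mem_image.mp h1
        have h2 : a' = a := congrArg Prod.fst heq
        subst h2
        exact absurd ha' hax
      · rw [Finsupp.notMem_support_iff.mp hax, Finsupp.notMem_support_iff.mp hay]
  have := Cardinal.mk_le_of_injective hinj
  exact this.trans (card_finset_le (card_prod_le hα hM hinf) hinf)

lemma card_dfinsupp_le {α : Type u} {M : α → Type u} [∀ a, Zero (M a)]
    (hα : #α ≤ lam) (hM : ∀ a, #(M a) ≤ lam) (hinf : ℵ₀ ≤ lam) : #(Π₀ a, M a) ≤ lam := by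
  have hinj : Function.Injective
      (fun x : Π₀ a, M a =>
        (x.support.image fun a => (⟨a, x a⟩ : Σ a, M a) : Finset (Σ a, M a))) := by
    intro x y hxy
    have hxy' : x.support.image (fun a => (⟨a, x a⟩ : Σ a, M a))
        = y.support.image (fun a => (⟨a, y a⟩ : Σ a, M a)) := hxy
    ext a
    by_cases hax : a ∈ x.support
    · have h1 : (⟨a, x a⟩ : Σ a, M a) ∈ y.support.image fun a => (⟨a, y a⟩ : Σ a, M a) := by
        rw [← hxy']; exact Finset.mem_image_of_mem _ hax
      obtain ⟨a', ha', heq⟩ := Finset.mem_image.mp h1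
      have h2 : a' = a := congrArg Sigma.fst heq
      subst h2
      exact (eq_of_heq (Sigma.mk.inj_iff.mp heq).2).symm
    · by_cases hay : a ∈ y.support
      · have h1 : (⟨a, y a⟩ : Σ a, M a) ∈ x.support.image fun a => (⟨a, x a⟩ : Σ a, M a) := by
          rw [hxy']; exact Finset.mem_image_of_mem _ hay
        obtain ⟨a', ha', heq⟩ := Finset.mem_image.mp h1
        have h2 : a' = a := congrArg Sigma.fst heq
        subst h2
        exact absurd ha' hax
      · rw [DFinsupp.notMem_support_iff.mp hax, DFinsupp.notMem_support_iff.mp hay]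
  have := Cardinal.mk_le_of_injective hinj
  exact this.trans (card_finset_le (card_sigma_le hα hM hinf) hinf)

lemma map_rangeRestrict_eq {R M N : Type u} [Ring R] [AddCommGroup M] [AddCommGroup N]
    [Module R M] [Module R N] (φ : M →ₗ[R] N) (p : Submodule R M) :
    Submodule.map φ.rangeRestrict p
      = Submodule.comap (LinearMap.range φ).subtype (Submodule.map φ p) := by
  ext y
  simp only [Submodule.mem_map, Submodule.mem_comap, Submodule.coe_subtype]
  constructor
  · rintro ⟨x, hx, rfl⟩; exact ⟨x, hx, rfl⟩
  · rintro ⟨x, hx, hxy⟩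
    exact ⟨x, hx, Subtype.ext hxy⟩


end CardAux

open TreeAux CardAux

open DeconAEC in
/-- tree modules, Lemma 3.4 of Šaroch. Given a well-ordered directed
system `(G i | i : ι)` of `λ`-presented modules indexed by an infinite regular cardinal
`μ` (i.e. the order type of `ι` is `μ`), with `λ^μ > λ^{<μ} = λ ≥ |R|`, put
`N = ⊕_{i} G i` and `C = lim G`. Then there are a module `L`, a submodule `D ≤ L` with
`|D| ≤ λ`, an epimorphism `π : N^{(λ^μ)} → L` and an epimorphism `g : L → C^{(λ^μ)}`
with kernel `D`, such that for every finite `S ⊆ λ^μ` the module `π(N^{(S)})` is a direct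
summand of `L` and decomposes as a direct sum of modules isomorphic to modules among the
`G i`. -/
theorem tree_modules (R : Type u) [Ring R] (μ : Cardinal.{u}) (hμ : μ.IsRegular)
    (ι : Type u) [LinearOrder ι] [WellFoundedLT ι] [DecidableEq ι]
    (htype : Ordinal.type ((· < ·) : ι → ι → Prop) = μ.ord)
    (G : ι → Type u) [∀ i, AddCommGroup (G i)] [∀ i, Module R (G i)]
    (f : ∀ i j, i ≤ j → G i →ₗ[R] G j)
    (hsys : DirectedSystem G fun i j h => f i j h)
    (lam : Cardinal.{u}) (hpow : lam < lam ^ μ) (hplt : lam ^< μ = lam) (hR : #R ≤ lam)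
    (hpres : ∀ i, PresentedLE R lam (ModuleCat.of R (G i)))
    (J : Type u) (hJ : #J = lam ^ μ) :
    ∃ (L : ModuleCat.{u} R) (D : Submodule R ↥L)
      (π : (J →₀ (⨁ i, G i)) →ₗ[R] ↥L)
      (g : ↥L →ₗ[R] (J →₀ Module.DirectLimit G f)),
      Function.Surjective π ∧
      #↥D ≤ lam ∧ Function.Surjective g ∧ LinearMap.ker g = D ∧
      ∀ S : Set J, S.Finite →
        (∃ Q : Submodule R ↥L,
          IsCompl ((Finsupp.supported (⨁ i, G i) R S).map π) Q) ∧
        (∃ (σι : Type u) (h : σι → ι),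
          Nonempty ((↥((Finsupp.supported (⨁ i, G i) R S).map π)) ≃ₗ[R]
            (⨁ k : σι, G (h k)))) := by

  classical
  haveI := hsys
  -- cardinal arithmetic preliminaries
  have hμinf : ℵ₀ ≤ μ := hμ.aleph0_le
  have hμ0 : μ ≠ 0 := hμ.pos.ne'
  have hlam2 : (2 : Cardinal) ≤ lam := by
    by_contra hc
    rw [Cardinal.two_le_iff_one_lt, not_lt] at hc
    rcases hc.lt_or_eq with h | rfl
    · rw [Cardinal.lt_one_iff_zero] at h
      subst h
      rw [Cardinal.zero_power hμ0] at hpow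
      exact lt_irrefl _ hpow
    · rw [Cardinal.one_power] at hpow
      exact lt_irrefl _ hpow
  have hμle : μ ≤ lam := by
    by_contra hc
    have h1 : lam < 2 ^ lam := Cardinal.cantor lam
    have h2 : (2 : Cardinal) ^ lam ≤ lam ^ lam := Cardinal.power_le_power_right hlam2
    have h3 : lam ^ lam ≤ lam ^< μ := Cardinal.le_powerlt lam (not_le.mp hc)
    rw [hplt] at h3
    exact lt_irrefl _ (h1.trans_le (h2.trans h3))
  have hinf : ℵ₀ ≤ lam := hμinf.trans hμle
  have hmkι : #ι = μ := by
    rw [← Ordinal.card_type ((· < ·) : ι → ι → Prop), htype, Cardinal.card_ord]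
  haveI hne_ι : Nonempty ι := by
    rw [← Cardinal.mk_ne_zero_iff, hmkι]
    exact hμ0
  -- the order ι is unbounded and every element has a successor
  have hsucc : ∀ d : ι, ∃ D, d < D ∧ ∀ k, d < k → D ≤ k := by
    intro d
    have hlim : Order.IsSuccLimit (μ.ord) := Cardinal.isSuccLimit_ord hμinf
    have h1 : Ordinal.typein ((· < ·) : ι → ι → Prop) d + 1
        < Ordinal.type ((· < ·) : ι → ι → Prop) := by
      rw [htype]
      rw [← Order.succ_eq_add_one]
      exact hlim.succ_lt (htype ▸ Ordinal.typein_lt_type _ d)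
    set D0 : ι := Ordinal.enum ((· < ·) : ι → ι → Prop) ⟨_, Set.mem_Iio.mpr h1⟩ with hD0
    have hdD0 : d < D0 := by
      have h2 : Ordinal.typein ((· < ·) : ι → ι → Prop) d
          < Ordinal.typein ((· < ·) : ι → ι → Prop) D0 := by
        rw [hD0, Ordinal.typein_enum _ h1]
        exact lt_of_lt_of_le (lt_add_one _) le_rfl
      exact (Ordinal.typein_lt_typein _).mp h2
    have hset : {k : ι | d < k}.Nonempty := ⟨D0, hdD0⟩
    refine ⟨wellFounded_lt.min _ hset, wellFounded_lt.min_mem _ hset, ?_⟩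
    intro k hk
    by_contra hc
    exact wellFounded_lt.not_lt_min _ (hk : k ∈ {k : ι | d < k}) (not_le.mp hc)
  have hlevel : ∀ k : ι, #{i : ι // i < k} < μ := by
    intro k
    have h1 := Ordinal.typein_lt_type ((· < ·) : ι → ι → Prop) k
    rw [htype, Cardinal.lt_ord] at h1
    show (Ordinal.typein ((· < ·) : ι → ι → Prop) k).card < μ
    exact h1
  -- module cardinalities
  have hGcard : ∀ i, #(G i) ≤ lam := by
    intro i
    obtain ⟨κ, fp, s, hκ, hfp, _, _⟩ := hpres i
    have h1 : #(κ →₀ R) ≤ lam := card_finsupp_le hκ hR hinf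
    exact le_trans (Cardinal.mk_le_of_surjective hfp) h1
  have hNcard : #(⨁ i, G i) ≤ lam :=
    card_dfinsupp_le (hmkι ▸ hμle) hGcard hinf
  -- branches
  set Λ : Type u := Quotient.out lam with hΛdef
  have hΛ : #Λ = lam := Cardinal.mk_out lam
  have hJΛ : #J = #(ι → Λ) := by
    rw [hJ, ← Cardinal.power_def, hΛ, hmkι]
  obtain ⟨e⟩ := Cardinal.eq.mp hJΛ
  set b : J → ι → Λ := ⇑e with hbdef
  have hb : Function.Injective b := e.injective
  have hNode : #(Node ι Λ) ≤ lam := by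
    refine card_sigma_le (hmkι ▸ hμle) (fun k => ?_) hinf
    have h1 : #({i : ι // i < k} → Λ) = lam ^ #{i : ι // i < k} := by
      rw [← hΛ, Cardinal.power_def]
    rw [h1]
    exact le_trans (Cardinal.le_powerlt lam (hlevel k)) (le_of_eq hplt)
  -- the target module L and maps
  set π' : (J →₀ ⨁ i, G i) →ₗ[R] P G Λ := piTree f b with hπ'def
  set Lsub : Submodule R (P G Λ) := LinearMap.range π' with hLdef
  set πr : (J →₀ ⨁ i, G i) →ₗ[R] ↥Lsub := π'.rangeRestrict with hπrdef
  have hπsurj : Function.Surjective πr := π'.surjective_rangeRestrict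
  have hker : LinearMap.ker π' ≤ LinearMap.ker (qF f (J := J)) :=
    ker_piTree_le_ker_qF f b hb hsys hsucc
  set g0 : ↥Lsub →ₗ[R] (J →₀ Module.DirectLimit G f) :=
    (Submodule.liftQ (LinearMap.ker π') (qF f) hker).comp
      (π'.quotKerEquivRange).symm.toLinearMap with hg0def
  have hg0 : ∀ x, g0 (πr x) = qF f x := by
    intro x
    have h1 : (π'.quotKerEquivRange).symm (πr x) = Submodule.Quotient.mk x := by
      rw [LinearEquiv.symm_apply_eq]
      apply Subtype.ext
      rw [LinearMap.quotKerEquivRange_apply_mk]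
      rfl
    rw [hg0def, LinearMap.comp_apply, LinearEquiv.coe_toLinearMap, h1, Submodule.liftQ_apply]
  have hg0surj : Function.Surjective g0 := by
    intro z
    obtain ⟨x, hx⟩ := qF_surjective f (J := J) z
    exact ⟨πr x, by rw [hg0 x, hx]⟩
  set D : Submodule R ↥Lsub := Submodule.map πr (LinearMap.ker (qF f (J := J))) with hDdef
  have hkerg0 : LinearMap.ker g0 = D := by
    apply le_antisymm
    · intro y hy
      obtain ⟨x, rfl⟩ := hπsurj y
      rw [LinearMap.mem_ker, hg0 x] at hy
      exact ⟨x, hy, rfl⟩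
    · rintro _ ⟨x, hx, rfl⟩
      rw [LinearMap.mem_ker, hg0 x]
      exact hx
  -- cardinality of D
  have hDcard : #↥D ≤ lam := by
    set TR : Set (P G Λ) := Set.range (truncFun f (Λ := Λ)) with hTRdef
    have hTR : #↥TR ≤ lam :=
      le_trans Cardinal.mk_range_le (card_prod_le hNcard hNode hinf)
    set SumSet : Set (P G Λ) :=
      Set.range (fun l : List ↥TR => (l.map Subtype.val).sum) with hSSdef
    have hSS : #↥SumSet ≤ lam := by
      refine le_trans Cardinal.mk_range_le ?_
      refine le_trans (Cardinal.mk_list_le_max _) ?_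
      exact max_le hinf hTR
    have hsub : Subtype.val '' (D : Set ↥Lsub) ⊆ SumSet := by
      rintro _ ⟨y, hy, rfl⟩
      rw [hDdef] at hy
      obtain ⟨x, hx, rfl⟩ := hy
      have hxj : ∀ j, qN f (x j) = 0 := (mem_ker_qF f x).mp hx
      refine ⟨x.support.toList.map fun j =>
        (⟨rayN f (b j) (x j), rayN_mem_trunc_range f b hsys j (x j) (hxj j)⟩ : ↥TR), ?_⟩
      dsimp only
      rw [List.map_map]
      have h2 : (Subtype.val ∘ fun j =>
          (⟨rayN f (b j) (x j), rayN_mem_trunc_range f b hsys j (x j) (hxj j)⟩ : ↥TR))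
          = fun j => rayN f (b j) (x j) := rfl
      rw [h2, Finset.sum_map_toList]
      exact (piTree_apply f b x).symm
    have h3 : #↥D = #↥(Subtype.val '' (D : Set ↥Lsub)) :=
      (Cardinal.mk_image_eq Subtype.val_injective).symm
    rw [h3]
    exact le_trans (Cardinal.mk_le_mk_of_subset hsub) hSS
  refine ⟨ModuleCat.of R ↥Lsub, D, πr, g0, hπsurj, hDcard, hg0surj, hkerg0, ?_⟩
  -- the finite subsets
  intro S hS
  set Sf : Finset J := hS.toFinset with hSfdef
  have hSfS : ∀ j, j ∈ Sf ↔ j ∈ S := fun j => hS.mem_toFinset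
  obtain ⟨δ, hsep, hsup⟩ := exists_delta f b hsys hb hsucc Sf
  set A : Submodule R (P G Λ) := Sf.sup (fun j => Tail f (b j) none) with hAdef
  have hAeq : Submodule.map π' (Finsupp.supported (⨁ i, G i) R S) = A := by
    rw [hπ'def, map_supported f b S, hAdef]
    apply le_antisymm
    · refine iSup_le fun j => ?_
      rw [range_rayN_eq]
      exact Finset.le_sup (f := fun j => Tail f (b j) none) ((hSfS j.1).mpr j.2)
    · refine Finset.sup_le fun j hj => ?_
      rw [← range_rayN_eq]
      exact le_iSup (fun j : ↥S => LinearMap.range (rayN f (b j.1))) ⟨j, (hSfS j).mp hj⟩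
  have hALsub : A ≤ Lsub := by
    rw [← hAeq, hLdef]
    exact LinearMap.map_le_range
  have hMeq : (Finsupp.supported (⨁ i, G i) R S).map πr
      = Submodule.comap Lsub.subtype A := by
    rw [hπrdef, map_rangeRestrict_eq, hAeq]
  constructor
  · -- direct summand
    rcases S.eq_empty_or_nonempty with rfl | hSne
    · refine ⟨⊤, ?_⟩
      rw [Finsupp.supported_empty, Submodule.map_bot]
      exact isCompl_bot_top
    · have hSfne : Sf.Nonempty := by
        obtain ⟨j, hj⟩ := hSne
        exact ⟨j, (hSfS j).mpr hj⟩
      set dOut : J → ι := fun j => (Sf.image fun j' => splitT b j j').max' (hSfne.image _)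
        with hdOutdef
      have hdOut : ∀ j, ∀ j' ∈ Sf, splitT b j j' ≤ dOut j := fun j j' hj' =>
        Finset.le_max' _ _ (Finset.mem_image_of_mem _ hj')
      have hclose : ∀ j, ∃ j' ∈ Sf, splitT b j j' = dOut j := by
        intro j
        have := (Sf.image fun j' => splitT b j j').max'_mem (hSfne.image _)
        rw [Finset.mem_image] at this
        exact this
      set B : Submodule R (P G Λ) :=
        ⨆ j : {j : J // j ∉ Sf}, Tail f (b j.1) (some (dOut j.1)) with hBdef
      have hsup2 : A ⊔ B = LinearMap.range π' := by
        rw [hAdef, hBdef, hπ'def]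
        exact sup_compl f b Sf hb hsys hsucc dOut (fun j _ => hdOut j)
          (fun j _ => hclose j)
      have hdisj : ∀ z ∈ A, z ∈ B → z = 0 := by
        intro z hzA hzB
        have h1 : z ∈ POn (R := R) b Sf := by
          have : A ≤ POn (R := R) b Sf :=
            Finset.sup_le fun j hj => tail_le_POn f b Sf hj
          exact this hzA
        have h2 : z ∈ POff (R := R) b Sf := by
          have : B ≤ POff (R := R) b Sf := by
            refine iSup_le fun j => ?_
            exact tail_le_POff f b Sf hb j.2 (hdOut j.1)
          exact this hzB
        exact POn_inf_POff b Sf z h1 h2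
      have hBLsub : B ≤ Lsub := by
        rw [hLdef, ← hsup2]
        exact le_sup_right
      refine ⟨Submodule.comap Lsub.subtype B, ?_, ?_⟩
      · -- disjoint
        rw [Submodule.disjoint_def]
        intro y hyM hyQ
        rw [hMeq] at hyM
        have h1 := Submodule.mem_comap.mp hyM
        have h2 := Submodule.mem_comap.mp hyQ
        exact Subtype.ext (hdisj _ h1 h2)
      · -- codisjoint
        rw [codisjoint_iff_le_sup]
        intro y _
        have h1 : Lsub.subtype y ∈ A ⊔ B := by
          rw [hsup2]
          exact Submodule.coe_mem y
        obtain ⟨a, ha, v, hv, hav⟩ := Submodule.mem_sup.mp h1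
        have haL : a ∈ Lsub := hALsub ha
        have hvL : v ∈ Lsub := hBLsub hv
        refine Submodule.mem_sup.mpr ⟨⟨a, haL⟩, ?_, ⟨v, hvL⟩, ?_, ?_⟩
        · rw [hMeq]
          exact Submodule.mem_comap.mpr ha
        · exact Submodule.mem_comap.mpr hv
        · apply Subtype.ext
          rw [Submodule.coe_add]
          exact hav
  · -- the isomorphism
    have hAeq2 : A = LinearMap.range (Phi f b Sf δ) := by
      rw [range_Phi, hsup, hAdef]
    have hinj : Function.Injective (Phi f b Sf δ) := Phi_injective f b Sf δ hsep hsys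
    refine ⟨SIG Sf δ, fun p => p.2.1, ⟨?_⟩⟩
    have e1 : (↥((Finsupp.supported (⨁ i, G i) R S).map πr)) ≃ₗ[R] ↥A := by
      rw [hMeq]
      exact Submodule.comapSubtypeEquivOfLe hALsub
    have e2 : ↥A ≃ₗ[R] ↥(LinearMap.range (Phi f b Sf δ)) :=
      LinearEquiv.ofEq _ _ hAeq2
    have e3 := (LinearEquiv.ofInjective (Phi f b Sf δ) hinj).symm
    exact (e1 ≪≫ₗ e2) ≪≫ₗ e3
end

section
/- Let R be a ring, κ an infinite cardinal, and M a κ-presented right R-module. Then M is a strong splitter if and only if Ext¹_R(M, M^(κ)) = 0, where M^(κ) denotes the direct sum of κ copies of M. -/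
universe u

open Cardinal DirectSum

open CategoryTheory Limits Finsupp

noncomputable section
namespace SSAux

variable {R : Type u} [Ring R] {M : ModuleCat.{u} R}
variable {ι : Type u} (f : (ι →₀ R) →ₗ[R] ↥M)

/-- projection from the free module on `ker f` onto `ker f`. -/
def proj : ((LinearMap.ker f) →₀ R) →ₗ[R] (LinearMap.ker f) :=
  Finsupp.linearCombination R _root_.id

@[simp] lemma proj_single (k : LinearMap.ker f) : proj f (Finsupp.single k 1) = k := by
  simp [proj]

lemma proj_surjective : Function.Surjective (proj f) := fun k => ⟨Finsupp.single k 1, by simp⟩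

def d1 : ModuleCat.of R ((LinearMap.ker f) →₀ R) ⟶ ModuleCat.of R (ι →₀ R) :=
  ModuleCat.ofHom ((LinearMap.ker f).subtype ∘ₗ proj f)

lemma range_d1 : LinearMap.range (d1 f).hom = LinearMap.ker f := by
  have : (d1 f).hom = (LinearMap.ker f).subtype ∘ₗ proj f := rfl
  rw [this, LinearMap.range_comp, LinearMap.range_eq_top.2 (proj_surjective f),
    Submodule.map_top, Submodule.range_subtype]

lemma d1_comp_f : (d1 f : ModuleCat.of R ((LinearMap.ker f) →₀ R) ⟶ ModuleCat.of R (ι →₀ R)) ≫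
    (ModuleCat.ofHom f : ModuleCat.of R (ι →₀ R) ⟶ M) = 0 := by
  apply ModuleCat.hom_ext
  apply LinearMap.ext
  intro x
  exact (proj f x).2

/-- the resolution complex built from the presentation. -/
def resComplex : ChainComplex (ModuleCat.{u} R) ℕ :=
  ChainComplex.mk' (ModuleCat.of R (ι →₀ R)) (ModuleCat.of R ((LinearMap.ker f) →₀ R)) (d1 f)
    (fun g => ⟨Projective.syzygies g, Projective.d g, by dsimp only [Projective.d, Projective.syzygies]; simp; rfl⟩)

lemma resComplex_d_1_0 : (resComplex f).d 1 0 = d1 f := by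
  simp [resComplex]

lemma resComplex_exactAt_succ (n : ℕ) : (resComplex f).ExactAt (n + 1) := by
  rw [HomologicalComplex.exactAt_iff' _ (n + 1 + 1) (n + 1) n (by simp) (by simp)]
  have hE := CategoryTheory.exact_d_f ((resComplex f).d (n + 1) n)
  refine (ShortComplex.exact_iff_of_iso ?_).2 hE
  refine ShortComplex.isoMk (ChainComplex.mk'XIso (ModuleCat.of R (ι →₀ R)) (ModuleCat.of R ((LinearMap.ker f) →₀ R)) (d1 f)
    (fun g => ⟨Projective.syzygies g, Projective.d g, by dsimp only [Projective.d, Projective.syzygies]; simp; rfl⟩) n)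
    (Iso.refl _) (Iso.refl _) ?_ ?_
  · exact (ChainComplex.mk'_d (ModuleCat.of R (ι →₀ R)) (ModuleCat.of R ((LinearMap.ker f) →₀ R)) (d1 f)
      (fun g => ⟨Projective.syzygies g, Projective.d g, by dsimp only [Projective.d, Projective.syzygies]; simp; rfl⟩) n).symm.trans (Category.comp_id _).symm
  · exact (Category.id_comp _).trans (Category.comp_id _).symm

instance (n : ℕ) : Projective ((resComplex f).X n) := by
  obtain (_ | _ | _ | n) := n
  · exact ModuleCat.projective_of_free Finsupp.basisSingleOne
  · exact ModuleCat.projective_of_free Finsupp.basisSingleOne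
  all_goals apply Projective.projective_over

section
variable (hf : Function.Surjective f)

def resπ : resComplex f ⟶ (ChainComplex.single₀ (ModuleCat.{u} R)).obj M :=
  (ChainComplex.toSingle₀Equiv (resComplex f) M).symm
    ⟨(ModuleCat.ofHom f : ModuleCat.of R (ι →₀ R) ⟶ M), by rw [resComplex_d_1_0]; exact d1_comp_f f⟩

/-- The projective resolution built from a presentation. -/
def res (hf : Function.Surjective f) : ProjectiveResolution M where
  complex := resComplex f
  π := resπ f
  quasiIso := ⟨fun n => by
    cases n
    · rw [ChainComplex.quasiIsoAt₀_iff, ShortComplex.quasiIso_iff_of_zeros']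
      · refine (ShortComplex.exact_and_epi_g_iff_of_iso ?_).2
          ⟨ShortComplex.Exact.moduleCat_of_range_eq_ker (d1 f)
              (ModuleCat.ofHom f : ModuleCat.of R (ι →₀ R) ⟶ M) (range_d1 f),
            (ModuleCat.epi_iff_surjective _).2 hf⟩
        exact ShortComplex.isoMk (Iso.refl _) (Iso.refl _) (Iso.refl _)
          (by simp [resComplex_d_1_0]; exact (Category.id_comp _).trans (Category.comp_id _).symm)
          (by simp [resπ]; exact (Category.id_comp _).trans (Category.comp_id _).symm)
      all_goals rfl
    · rw [quasiIsoAt_iff_exactAt']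
      · apply resComplex_exactAt_succ
      · apply ChainComplex.exactAt_succ_single_obj⟩

end


/-- In `ModuleCat`, subsingleton transfers along isomorphisms. -/
lemma subsingleton_of_iso {S : Type*} [Ring S] {X Y : ModuleCat S} (e : X ≅ Y)
    [Subsingleton Y] : Subsingleton X := by
  constructor
  intro a b
  have : ∀ z : X, e.inv (e.hom z) = z := fun z =>
    congrFun (congrArg (fun (h : X ⟶ X) => (h : X → X)) e.hom_inv_id) z
  rw [← this a, ← this b, Subsingleton.elim (e.hom a) (e.hom b)]

lemma subsingleton_of_isZero {S : Type*} [Ring S] {X : ModuleCat S}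
    (h : Limits.IsZero X) : Subsingleton X := by
  constructor
  intro a b
  have h0 : (𝟙 X : X ⟶ X) = 0 := h.eq_of_src _ _
  have : ∀ z : X, z = 0 := fun z => by
    have := congrFun (congrArg (fun (h : X ⟶ X) => (h : X → X)) h0) z
    simpa using this
  rw [this a, this b]

lemma range_d21 : LinearMap.range ((resComplex f).d 2 1).hom =
    LinearMap.ker ((resComplex f).d 1 0).hom := by
  have h := resComplex_exactAt_succ f 0
  rw [HomologicalComplex.exactAt_iff' _ 2 1 0 (by simp) (by simp)] at h
  exact h.moduleCat_range_eq_ker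

lemma ker_d1 : LinearMap.ker (d1 f).hom = LinearMap.ker (proj f) := by
  have : (d1 f).hom = (LinearMap.ker f).subtype ∘ₗ proj f := rfl
  rw [this, LinearMap.ker_comp, Submodule.ker_subtype, Submodule.comap_bot]

/-- `Ext¹(M, N) = 0` iff every map from the relation module extends to the free cover. -/
lemma extVanish_iff_lift (hf : Function.Surjective f) (N : ModuleCat.{u} R) :
    Subsingleton (((_root_.Ext ℤ (ModuleCat.{u} R) 1).obj (Opposite.op M)).obj N) ↔
      ∀ φ : (LinearMap.ker f) →ₗ[R] ↥N, ∃ ψ : (ι →₀ R) →ₗ[R] ↥N,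
        ∀ x : LinearMap.ker f, ψ x.1 = φ x := by
  set L := (resComplex f).linearYonedaObj ℤ N with hL
  have key : Subsingleton (((_root_.Ext ℤ (ModuleCat.{u} R) 1).obj (Opposite.op M)).obj N) ↔
      ∀ g : (resComplex f).X 1 ⟶ N, (resComplex f).d 2 1 ≫ g = 0 →
        ∃ h : (resComplex f).X 0 ⟶ N, (resComplex f).d 1 0 ≫ h = g := by
    have e := (res f hf).isoExt (R := ℤ) 1 N
    have h1 : Subsingleton (((_root_.Ext ℤ (ModuleCat.{u} R) 1).obj (Opposite.op M)).obj N) ↔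
        Subsingleton (L.homology 1) := by
      constructor
      · intro h; exact @subsingleton_of_iso _ _ _ _ e.symm h
      · intro h; exact @subsingleton_of_iso _ _ _ _ e h
    rw [h1]
    have h2 : Subsingleton (L.homology 1) ↔ L.ExactAt 1 := by
      rw [HomologicalComplex.exactAt_iff_isZero_homology]
      exact ⟨fun h => @ModuleCat.isZero_of_subsingleton _ _ _ h, subsingleton_of_isZero⟩
    rw [h2, HomologicalComplex.exactAt_iff' _ 0 1 2 (by simp) (by simp),
      ShortComplex.moduleCat_exact_iff]
    constructor
    · intro h g hg
      obtain ⟨ψ, hψ⟩ := h g hg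
      exact ⟨ψ, hψ⟩
    · intro h g hg
      obtain ⟨ψ, hψ⟩ := h g hg
      exact ⟨ψ, hψ⟩
  rw [key]
  constructor
  · intro h φ
    set g : (resComplex f).X 1 ⟶ N := ModuleCat.ofHom (φ ∘ₗ proj f : ((LinearMap.ker f) →₀ R) →ₗ[R] ↥N) with hgdef
    have hg : (resComplex f).d 2 1 ≫ g = 0 := by
      apply ModuleCat.hom_ext
      apply LinearMap.ext
      intro x
      have h5 : (d1 f).hom (((resComplex f).d 2 1).hom x) = 0 := by
        have hdd := (resComplex f).d_comp_d 2 1 0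
        rw [resComplex_d_1_0] at hdd
        exact LinearMap.congr_fun (congrArg ModuleCat.Hom.hom hdd) x
      have h6 : proj f (((resComplex f).d 2 1).hom x) = 0 := Subtype.ext h5
      have h7 : φ ((proj f) (((resComplex f).d 2 1).hom x)) = 0 := by rw [h6, map_zero]
      exact h7
    obtain ⟨ψ, hψ⟩ := h g hg
    rw [resComplex_d_1_0] at hψ
    refine ⟨ψ.hom, fun x => ?_⟩
    have h1 : (d1 f).hom (Finsupp.single x 1) = x.1 := by
      show ((LinearMap.ker f).subtype ∘ₗ proj f) (Finsupp.single x 1) = x.1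
      simp
    have h2 : (d1 f ≫ ψ).hom (Finsupp.single x 1) = g.hom (Finsupp.single x 1) :=
      LinearMap.congr_fun (congrArg ModuleCat.Hom.hom hψ) _
    have h3 : (d1 f ≫ ψ).hom (Finsupp.single x 1) = ψ.hom x.1 := by
      show ψ.hom ((d1 f).hom (Finsupp.single x 1)) = ψ.hom x.1
      rw [h1]
    have h4 : g.hom (Finsupp.single x 1) = φ x := by
      show φ (proj f (Finsupp.single x 1)) = φ x
      rw [proj_single]
    exact h3.symm.trans (h2.trans h4)
  · intro h g hg
    set g' : ((LinearMap.ker f) →₀ R) →ₗ[R] ↥N := g.hom with hg'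
    have hker : ∀ x : ((LinearMap.ker f) →₀ R), proj f x = 0 → g' x = 0 := by
      intro x hx
      have hx1 : x ∈ LinearMap.ker ((resComplex f).d 1 0).hom := by
        rw [resComplex_d_1_0]; exact congrArg Subtype.val hx
      rw [← range_d21] at hx1
      obtain ⟨y, hy⟩ := hx1
      have h0 : ((resComplex f).d 2 1 ≫ g).hom y = 0 := by rw [hg]; rfl
      rw [← hy]
      exact h0
    set φ : (LinearMap.ker f) →ₗ[R] ↥N :=
      { toFun := fun k => g' (Finsupp.single k 1)
        map_add' := fun k k' => by
          have h0 : g' (Finsupp.single (k + k') 1 -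
              (Finsupp.single k 1 + Finsupp.single k' 1)) = 0 :=
            hker _ (by simp [proj])
          rw [map_sub, sub_eq_zero] at h0
          show g' (Finsupp.single (k + k') 1) =
            g' (Finsupp.single k 1) + g' (Finsupp.single k' 1)
          rw [h0, map_add]
        map_smul' := fun r k => by
          have h0 : g' (Finsupp.single (r • k) 1 - r • Finsupp.single k 1) = 0 :=
            hker _ (by simp [proj])
          rw [map_sub, sub_eq_zero] at h0
          show g' (Finsupp.single (r • k) 1) = r • g' (Finsupp.single k 1)
          rw [h0, map_smul] } with hφdef
    obtain ⟨ψ, hψ⟩ := h φ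
    refine ⟨ModuleCat.ofHom ψ, ?_⟩
    rw [resComplex_d_1_0]
    apply ModuleCat.hom_ext
    apply Finsupp.lhom_ext (M := R) (N := ↥N)
    intro k r
    show ψ ((d1 f).hom (Finsupp.single k r)) = g' (Finsupp.single k r)
    have h1 : (d1 f).hom (Finsupp.single k r) = r • k.1 := by
      show ((LinearMap.ker f).subtype ∘ₗ proj f) (Finsupp.single k r) = r • k.1
      simp [proj]
    have h2 : Finsupp.single k r = r • Finsupp.single k (1 : R) := by
      rw [Finsupp.smul_single, smul_eq_mul, mul_one]
    calc ψ ((d1 f).hom (Finsupp.single k r)) = ψ (r • k.1) := by rw [h1]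
      _ = r • ψ k.1 := map_smul ψ r k.1
      _ = r • φ k := by rw [hψ k]
      _ = r • g' (Finsupp.single k 1) := rfl
      _ = g' (r • Finsupp.single k (1 : R)) := (map_smul g' r _).symm
      _ = g' (Finsupp.single k r) := by rw [← h2]

/-- Ext-vanishing transfers to retracts (in the second variable). -/
lemma extVanish_retract {N N' : ModuleCat.{u} R} (i : N ⟶ N') (r : N' ⟶ N)
    (hir : i ≫ r = 𝟙 N)
    (h : Subsingleton (((_root_.Ext ℤ (ModuleCat.{u} R) 1).obj (Opposite.op M)).obj N')) :
    Subsingleton (((_root_.Ext ℤ (ModuleCat.{u} R) 1).obj (Opposite.op M)).obj N) := by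
  set F := (_root_.Ext ℤ (ModuleCat.{u} R) 1).obj (Opposite.op M) with hF
  constructor
  intro a b
  have hcomp : F.map i ≫ F.map r = 𝟙 (F.obj N) := by
    rw [← F.map_comp, hir, F.map_id]
  have ha : (F.map i ≫ F.map r).hom a = a := by rw [hcomp]; rfl
  have hb : (F.map i ≫ F.map r).hom b = b := by rw [hcomp]; rfl
  have : (F.map i).hom a = (F.map i).hom b := Subsingleton.elim _ _
  calc a = (F.map i ≫ F.map r).hom a := ha.symm
    _ = (F.map r).hom ((F.map i).hom a) := rfl
    _ = (F.map r).hom ((F.map i).hom b) := by rw [this]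
    _ = (F.map i ≫ F.map r).hom b := rfl
    _ = b := hb

end SSAux
end


open DeconAEC in
/-- A `κ`-presented module `M` (`κ` infinite) is a strong splitter iff
`Ext¹_R(M, M^{(κ)}) = 0`. -/
theorem strong_splitter_iff_ext_power (R : Type u) [Ring R] (κ : Cardinal.{u})
    (hκ : ℵ₀ ≤ κ) (M : ModuleCat.{u} R) (hpres : PresentedLE R κ M) :
    StrongSplitter R M ↔
      ∀ I : Type u, #I = κ → ExtVanish R 1 M (ModuleCat.of R (I →₀ ↥M)) := by
  classical
  obtain ⟨ι, f, s, hι, hf, hs, hspan⟩ := hpres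
  constructor
  · intro h I _
    exact h I
  · intro hext I
    show Subsingleton _
    refine (SSAux.extVanish_iff_lift f hf (ModuleCat.of R (I →₀ ↥M))).2 ?_
    intro φ
    -- generators of the kernel
    have mem : ∀ a ∈ s, a ∈ LinearMap.ker f := by
      intro a ha
      rw [← hspan]
      exact Submodule.subset_span ha
    set S : ↥s → Set I := fun a => ↑((φ ⟨a.1, mem a.1 a.2⟩).support) with hS
    set J : Set I := ⋃ a, S a with hJdef
    have hJ : Cardinal.mk ↥J ≤ κ := by
      calc Cardinal.mk ↥J ≤ Cardinal.mk ↥s * ⨆ a, Cardinal.mk ↥(S a) :=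
            Cardinal.mk_iUnion_le S
        _ ≤ κ * ℵ₀ := mul_le_mul' hs (ciSup_le' fun a =>
            ((φ ⟨a.1, mem a.1 a.2⟩).support.finite_toSet.lt_aleph0).le)
        _ ≤ κ * κ := mul_le_mul_right hκ κ
        _ = κ := Cardinal.mul_eq_self hκ
    -- every value of φ is supported in J
    have hsupp : ∀ x : LinearMap.ker f, φ x ∈ Finsupp.supported ↥M R J := by
      intro x
      have hx : x.1 ∈ Submodule.span R s := by rw [hspan]; exact x.2
      have key : ∀ h : x.1 ∈ LinearMap.ker f, φ ⟨x.1, h⟩ ∈ Finsupp.supported ↥M R J := by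
        refine Submodule.span_induction
          (p := fun v _ => ∀ h : v ∈ LinearMap.ker f, φ ⟨v, h⟩ ∈ Finsupp.supported ↥M R J)
          ?_ ?_ ?_ ?_ hx
        · intro a ha h
          rw [Finsupp.mem_supported]
          exact Set.subset_iUnion S ⟨a, ha⟩
        · intro h
          have h0 : (⟨(0 : ι →₀ R), h⟩ : LinearMap.ker f) = 0 := rfl
          rw [h0, map_zero]
          exact Submodule.zero_mem _
        · intro v w hv hw hv' hw' h
          have hv0 : v ∈ LinearMap.ker f := by rw [← hspan]; exact hv
          have hw0 : w ∈ LinearMap.ker f := by rw [← hspan]; exact hw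
          have h0 : (⟨v + w, h⟩ : LinearMap.ker f) = ⟨v, hv0⟩ + ⟨w, hw0⟩ := rfl
          rw [h0, map_add]
          exact Submodule.add_mem _ (hv' hv0) (hw' hw0)
        · intro c v hv hv' h
          have hv0 : v ∈ LinearMap.ker f := by rw [← hspan]; exact hv
          have h0 : (⟨c • v, h⟩ : LinearMap.ker f) = c • (⟨v, hv0⟩ : LinearMap.ker f) := rfl
          rw [h0, map_smul]
          exact Submodule.smul_mem _ _ (hv' hv0)
      have := key x.2
      simpa using this
    -- restrict φ to the direct sum over J
    set e := Finsupp.supportedEquivFinsupp (M := ↥M) (R := R) J with he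
    set φ₁ : (LinearMap.ker f) →ₗ[R] (↥J →₀ ↥M) :=
      e.toLinearMap ∘ₗ (φ.codRestrict (Finsupp.supported ↥M R J) hsupp) with hφ₁
    -- Ext vanishing for M^(J), as a retract of M^(J ⊕ κ)
    have hvan : Subsingleton
        (((_root_.Ext ℤ (ModuleCat.{u} R) 1).obj (Opposite.op M)).obj
          (ModuleCat.of R (↥J →₀ ↥M))) := by
      set E := Finsupp.sumFinsuppLEquivProdFinsupp (M := ↥M) R (α := ↥J) (β := κ.out) with hE
      refine SSAux.extVanish_retract
        (N := ModuleCat.of R (↥J →₀ ↥M))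
        (N' := ModuleCat.of R ((↥J ⊕ κ.out) →₀ ↥M))
        (ModuleCat.ofHom (E.symm.toLinearMap ∘ₗ LinearMap.inl R _ _ :
            (↥J →₀ ↥M) →ₗ[R] ((↥J ⊕ κ.out) →₀ ↥M)))
        (ModuleCat.ofHom (LinearMap.fst R _ _ ∘ₗ E.toLinearMap :
            ((↥J ⊕ κ.out) →₀ ↥M) →ₗ[R] (↥J →₀ ↥M))) ?_ ?_
      · apply ModuleCat.hom_ext
        apply LinearMap.ext
        intro x
        show (LinearMap.fst R _ _) (E (E.symm ((LinearMap.inl R _ _) x))) = x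
        rw [LinearEquiv.apply_symm_apply]
        rfl
      · have hcard : Cardinal.mk (↥J ⊕ κ.out) = κ := by
          rw [Cardinal.mk_sum, Cardinal.lift_id, Cardinal.lift_id, Cardinal.mk_out]
          exact Cardinal.add_eq_right hκ hJ
        exact hext (↥J ⊕ κ.out) hcard
    obtain ⟨ψ₁, hψ₁⟩ :=
      (SSAux.extVanish_iff_lift f hf (ModuleCat.of R (↥J →₀ ↥M))).1 hvan φ₁
    refine ⟨(Finsupp.supported ↥M R J).subtype ∘ₗ (e.symm.toLinearMap ∘ₗ ψ₁), fun x => ?_⟩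
    show ((Finsupp.supported ↥M R J).subtype (e.symm (ψ₁ x.1))) = φ x
    rw [hψ₁ x]
    show ((Finsupp.supported ↥M R J).subtype
      (e.symm (e ((φ.codRestrict (Finsupp.supported ↥M R J) hsupp) x)))) = φ x
    rw [LinearEquiv.symm_apply_apply]
    rfl
end
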